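/- arXiv:1605.04026 — 5 statements merged into one kernel-verified Lean document; each statement's English description precedes it below -/
import Mathlib

section
/- For n = 2 players, any number of items m ≥ 4, and any ε ∈ (0, 1/2], there is no truthful (1/2 + ε)-approximation mechanism for the ordinal model. -/
open Finset

/-- The total value of a bundle `S` of items under the additive valuation given by `v`. -/
noncomputable def bundleVal {m : ℕ} (v : Fin m → ℝ) (S : Finset (Fin m)) : ℝ :=
  ∑ j ∈ S, v j

/-- The bundle of items received by player `i` under the allocation `alloc`,
where `alloc j` is the player that receives item `j`.  (Such functions are exactly the
partitions of the items into `n` possibly empty bundles.) -/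
def bundleOf {n m : ℕ} (alloc : Fin m → Fin n) (i : Fin n) : Finset (Fin m) :=
  Finset.univ.filter fun j => alloc j = i

/-- The `n`-maximin share of a player with additive valuation `v` over the item set `Fin m`:
the maximum over all partitions of the items into `n` bundles of the minimum bundle value. -/
noncomputable def mms {m : ℕ} (n : ℕ) (v : Fin m → ℝ) : ℝ :=
  ⨆ f : Fin m → Fin n, ⨅ i : Fin n, bundleVal v (bundleOf f i)

/-- Truthfulness of a mechanism in the cardinal model. -/
def CardTruthful {n m : ℕ} (A : (Fin n → Fin m → ℝ) → (Fin m → Fin n)) : Prop :=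
  ∀ V : Fin n → Fin m → ℝ, (∀ i j, 0 ≤ V i j) →
    ∀ (i : Fin n) (v' : Fin m → ℝ), (∀ j, 0 ≤ v' j) →
      bundleVal (V i) (bundleOf (A (Function.update V i v')) i) ≤
        bundleVal (V i) (bundleOf (A V) i)

/-- `ρ`-approximation of a mechanism in the cardinal model. -/
def CardApprox {n m : ℕ} (ρ : ℝ) (A : (Fin n → Fin m → ℝ) → (Fin m → Fin n)) : Prop :=
  ∀ V : Fin n → Fin m → ℝ, (∀ i j, 0 ≤ V i j) →
    ∀ i : Fin n, ρ * mms n (V i) ≤ bundleVal (V i) (bundleOf (A V) i)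

/-- A ranking (strict total order on the items) is encoded as a permutation
`σ : Fin m ≃ Fin m` sending positions to items, `σ 0` being the top item.
A valuation `v` is consistent with the ranking `σ` if the values are
non-increasing along the positions of the ranking. -/
def Consistent {m : ℕ} (v : Fin m → ℝ) (σ : Equiv.Perm (Fin m)) : Prop :=
  ∀ k l : Fin m, k ≤ l → v (σ l) ≤ v (σ k)

/-- Truthfulness of a mechanism in the ordinal model. -/
def OrdTruthful {n m : ℕ} (A : (Fin n → Equiv.Perm (Fin m)) → (Fin m → Fin n)) : Prop :=
  ∀ (R : Fin n → Equiv.Perm (Fin m)) (i : Fin n) (v : Fin m → ℝ),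
    (∀ j, 0 ≤ v j) → Consistent v (R i) →
      ∀ σ' : Equiv.Perm (Fin m),
        bundleVal v (bundleOf (A (Function.update R i σ')) i) ≤
          bundleVal v (bundleOf (A R) i)

/-- `ρ`-approximation of a mechanism in the ordinal model. -/
def OrdApprox {n m : ℕ} (ρ : ℝ) (A : (Fin n → Equiv.Perm (Fin m)) → (Fin m → Fin n)) : Prop :=
  ∀ V : Fin n → Fin m → ℝ, (∀ i j, 0 ≤ V i j) →
    ∀ R : Fin n → Equiv.Perm (Fin m), (∀ i, Consistent (V i) (R i)) →
      ∀ i : Fin n, ρ * mms n (V i) ≤ bundleVal (V i) (bundleOf (A R) i)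

/-- Truthfulness of a mechanism in the public rankings model with publicly known rankings `R`. -/
def PRTruthful {n m : ℕ} (R : Fin n → Equiv.Perm (Fin m))
    (A : (Fin n → Fin m → ℝ) → (Fin m → Fin n)) : Prop :=
  ∀ V : Fin n → Fin m → ℝ, (∀ i j, 0 ≤ V i j) → (∀ i, Consistent (V i) (R i)) →
    ∀ (i : Fin n) (v' : Fin m → ℝ), (∀ j, 0 ≤ v' j) → Consistent v' (R i) →
      bundleVal (V i) (bundleOf (A (Function.update V i v')) i) ≤
        bundleVal (V i) (bundleOf (A V) i)

/-- `ρ`-approximation in the public rankings model with publicly known rankings `R`. -/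
def PRApprox {n m : ℕ} (ρ : ℝ) (R : Fin n → Equiv.Perm (Fin m))
    (A : (Fin n → Fin m → ℝ) → (Fin m → Fin n)) : Prop :=
  ∀ V : Fin n → Fin m → ℝ, (∀ i j, 0 ≤ V i j) → (∀ i, Consistent (V i) (R i)) →
    ∀ i : Fin n, ρ * mms n (V i) ≤ bundleVal (V i) (bundleOf (A V) i)

/-- The highest-ranked item of the nonempty set `S` according to the ranking `σ`. -/
def bestItem {m : ℕ} (σ : Equiv.Perm (Fin m)) (S : Finset (Fin m)) (h : S.Nonempty) : Fin m :=
  σ ((S.image σ.symm).min' (h.image σ.symm))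

/-- The (possibly partial) allocation produced by running the picking sequence `seq` on the
remaining items `S`: at each turn the current player of the sequence takes the highest-ranked
remaining item according to her ranking. -/
def pickAllocList {n m : ℕ} (R : Fin n → Equiv.Perm (Fin m)) :
    List (Fin n) → Finset (Fin m) → Fin m → Option (Fin n)
  | [], _ => fun _ => none
  | p :: rest, S =>
    if h : S.Nonempty then
      Function.update (pickAllocList R rest (S.erase (bestItem (R p) S h)))
        (bestItem (R p) S h) (some p)
    else fun _ => none

/-- The mechanism for the ordinal model induced by the picking sequence `seq`. -/
def pickMech {n m : ℕ} (seq : List (Fin n)) (R : Fin n → Equiv.Perm (Fin m)) :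
    Fin m → Option (Fin n) :=
  pickAllocList R seq Finset.univ

/-- The bundle of player `i` in a possibly partial allocation. -/
def obundleOf {n m : ℕ} (alloc : Fin m → Option (Fin n)) (i : Fin n) : Finset (Fin m) :=
  Finset.univ.filter fun j => alloc j = some i

/-- Truthfulness in the ordinal model, for mechanisms producing possibly partial allocations. -/
def OrdTruthfulO {n m : ℕ} (A : (Fin n → Equiv.Perm (Fin m)) → (Fin m → Option (Fin n))) : Prop :=
  ∀ (R : Fin n → Equiv.Perm (Fin m)) (i : Fin n) (v : Fin m → ℝ),
    (∀ j, 0 ≤ v j) → Consistent v (R i) →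
      ∀ σ' : Equiv.Perm (Fin m),
        bundleVal v (obundleOf (A (Function.update R i σ')) i) ≤
          bundleVal v (obundleOf (A R) i)

/-- `ρ`-approximation in the ordinal model, for mechanisms producing possibly partial
allocations. -/
def OrdApproxO {n m : ℕ} (ρ : ℝ)
    (A : (Fin n → Equiv.Perm (Fin m)) → (Fin m → Option (Fin n))) : Prop :=
  ∀ V : Fin n → Fin m → ℝ, (∀ i j, 0 ≤ V i j) →
    ∀ R : Fin n → Equiv.Perm (Fin m), (∀ i, Consistent (V i) (R i)) →
      ∀ i : Fin n, ρ * mms n (V i) ≤ bundleVal (V i) (obundleOf (A R) i)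

/-- Truthfulness in the public rankings model, for mechanisms producing possibly partial
allocations. -/
def PRTruthfulO {n m : ℕ} (R : Fin n → Equiv.Perm (Fin m))
    (A : (Fin n → Fin m → ℝ) → (Fin m → Option (Fin n))) : Prop :=
  ∀ V : Fin n → Fin m → ℝ, (∀ i j, 0 ≤ V i j) → (∀ i, Consistent (V i) (R i)) →
    ∀ (i : Fin n) (v' : Fin m → ℝ), (∀ j, 0 ≤ v' j) → Consistent v' (R i) →
      bundleVal (V i) (obundleOf (A (Function.update V i v')) i) ≤
        bundleVal (V i) (obundleOf (A V) i)

/-- `ρ`-approximation in the public rankings model, for mechanisms producing possibly partial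
allocations. -/
def PRApproxO {n m : ℕ} (ρ : ℝ) (R : Fin n → Equiv.Perm (Fin m))
    (A : (Fin n → Fin m → ℝ) → (Fin m → Option (Fin n))) : Prop :=
  ∀ V : Fin n → Fin m → ℝ, (∀ i j, 0 ≤ V i j) → (∀ i, Consistent (V i) (R i)) →
    ∀ i : Fin n, ρ * mms n (V i) ≤ bundleVal (V i) (obundleOf (A V) i)


namespace Stmt9Aux

variable {m : ℕ}

/-- The four relevant items. -/
def E0 (m : ℕ) : Fin (m + 4) := ⟨0, by omega⟩
def E1 (m : ℕ) : Fin (m + 4) := ⟨1, by omega⟩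
def E2 (m : ℕ) : Fin (m + 4) := ⟨2, by omega⟩
def E3 (m : ℕ) : Fin (m + 4) := ⟨3, by omega⟩

/-- Ranking b : items in order 0, 1, 3, 2. -/
def pb (m : ℕ) : Equiv.Perm (Fin (m + 4)) := Equiv.swap (E2 m) (E3 m)

/-- Ranking c : items in order 2, 0, 1, 3. -/
def pc (m : ℕ) : Equiv.Perm (Fin (m + 4)) :=
  Equiv.swap (E0 m) (E1 m) * Equiv.swap (E0 m) (E2 m)

lemma pb_val (j : Fin (m + 4)) :
    ((pb m j : Fin (m + 4)) : ℕ) = if (j : ℕ) = 2 then 3 else if (j : ℕ) = 3 then 2 else (j : ℕ) := by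
  rw [pb, Equiv.swap_apply_def]
  split_ifs <;> simp_all [E2, E3, Fin.ext_iff]

lemma pc_val (j : Fin (m + 4)) :
    ((pc m j : Fin (m + 4)) : ℕ) =
      if (j : ℕ) = 0 then 2 else if (j : ℕ) = 1 then 0 else if (j : ℕ) = 2 then 1 else (j : ℕ) := by
  rw [pc, Equiv.Perm.mul_apply, Equiv.swap_apply_def, Equiv.swap_apply_def]
  split_ifs <;> simp only [E0, E1, E2, Fin.ext_iff, Fin.val_mk, not_true_eq_false] at * <;> omega

/- Valuations. -/
def vS (m : ℕ) : Fin (m + 4) → ℝ := fun j => if (j : ℕ) ≤ 3 then 1 else 0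
def vQa (m : ℕ) : Fin (m + 4) → ℝ := fun j => if (j : ℕ) = 0 then 2 else if (j : ℕ) ≤ 2 then 1 else 0
def vQb (m : ℕ) : Fin (m + 4) → ℝ :=
  fun j => if (j : ℕ) = 0 then 2 else if (j : ℕ) = 1 ∨ (j : ℕ) = 3 then 1 else 0
def vQc (m : ℕ) : Fin (m + 4) → ℝ :=
  fun j => if (j : ℕ) = 2 then 2 else if (j : ℕ) ≤ 1 then 1 else 0
def w01 (m : ℕ) : Fin (m + 4) → ℝ := fun j => if (j : ℕ) ≤ 1 then 1 else 0
def w02 (m : ℕ) : Fin (m + 4) → ℝ := fun j => if (j : ℕ) = 0 ∨ (j : ℕ) = 2 then 1 else 0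
def w012 (m : ℕ) : Fin (m + 4) → ℝ := fun j => if (j : ℕ) ≤ 2 then 1 else 0

lemma vS_nn : ∀ j, 0 ≤ vS m j := by intro j; unfold vS; split_ifs <;> norm_num
lemma vQa_nn : ∀ j, 0 ≤ vQa m j := by intro j; unfold vQa; split_ifs <;> norm_num
lemma vQb_nn : ∀ j, 0 ≤ vQb m j := by intro j; unfold vQb; split_ifs <;> norm_num
lemma vQc_nn : ∀ j, 0 ≤ vQc m j := by intro j; unfold vQc; split_ifs <;> norm_num
lemma w01_nn : ∀ j, 0 ≤ w01 m j := by intro j; unfold w01; split_ifs <;> norm_num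
lemma w02_nn : ∀ j, 0 ≤ w02 m j := by intro j; unfold w02; split_ifs <;> norm_num
lemma w012_nn : ∀ j, 0 ≤ w012 m j := by intro j; unfold w012; split_ifs <;> norm_num

lemma vS_hi : ∀ j : Fin (m + 4), 3 < (j : ℕ) → vS m j = 0 := by
  intro j h; simp only [vS]; rw [if_neg (by omega)]
lemma vQa_hi : ∀ j : Fin (m + 4), 3 < (j : ℕ) → vQa m j = 0 := by
  intro j h; simp only [vQa]; rw [if_neg (by omega), if_neg (by omega)]
lemma vQb_hi : ∀ j : Fin (m + 4), 3 < (j : ℕ) → vQb m j = 0 := by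
  intro j h; simp only [vQb]; rw [if_neg (by omega), if_neg (by omega)]
lemma vQc_hi : ∀ j : Fin (m + 4), 3 < (j : ℕ) → vQc m j = 0 := by
  intro j h; simp only [vQc]; rw [if_neg (by omega), if_neg (by omega)]
lemma w01_hi : ∀ j : Fin (m + 4), 3 < (j : ℕ) → w01 m j = 0 := by
  intro j h; simp only [w01]; rw [if_neg (by omega)]
lemma w02_hi : ∀ j : Fin (m + 4), 3 < (j : ℕ) → w02 m j = 0 := by
  intro j h; simp only [w02]; rw [if_neg (by omega)]
lemma w012_hi : ∀ j : Fin (m + 4), 3 < (j : ℕ) → w012 m j = 0 := by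
  intro j h; simp only [w012]; rw [if_neg (by omega)]

/- Consistency. -/
lemma consistent_of (v : Fin (m + 4) → ℝ) (σ : Equiv.Perm (Fin (m + 4))) (u : ℕ → ℝ)
    (hu : ∀ i j : ℕ, i ≤ j → u j ≤ u i) (h : ∀ p : Fin (m + 4), v (σ p) = u (p : ℕ)) :
    Consistent v σ := by
  intro k l hkl
  rw [h, h]
  exact hu _ _ hkl

def u210 : ℕ → ℝ := fun k => if k = 0 then 2 else if k ≤ 2 then 1 else 0
def uI (t : ℕ) : ℕ → ℝ := fun k => if k ≤ t then 1 else 0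

lemma u210_anti : ∀ i j : ℕ, i ≤ j → u210 j ≤ u210 i := by
  intro i j h; unfold u210; split_ifs <;> first | (exfalso; omega) | norm_num
lemma uI_anti (t : ℕ) : ∀ i j : ℕ, i ≤ j → uI t j ≤ uI t i := by
  intro i j h; unfold uI; split_ifs <;> first | (exfalso; omega) | norm_num

lemma cons_vS_one : Consistent (vS m) 1 :=
  consistent_of _ _ (uI 3) (uI_anti 3) (fun p => rfl)
lemma cons_vQa_one : Consistent (vQa m) 1 :=
  consistent_of _ _ u210 u210_anti (fun p => rfl)
lemma cons_w012_one : Consistent (w012 m) 1 :=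
  consistent_of _ _ (uI 2) (uI_anti 2) (fun p => rfl)

lemma cons_vS_pb : Consistent (vS m) (pb m) := by
  refine consistent_of _ _ (uI 3) (uI_anti 3) (fun p => ?_)
  unfold vS uI
  rw [pb_val]
  split_ifs <;> first | rfl | (exfalso; first | exact ‹False› | omega | simp_all)
lemma cons_vS_pc : Consistent (vS m) (pc m) := by
  refine consistent_of _ _ (uI 3) (uI_anti 3) (fun p => ?_)
  unfold vS uI
  rw [pc_val]
  split_ifs <;> first | rfl | (exfalso; first | exact ‹False› | omega | simp_all)
lemma cons_vQb_pb : Consistent (vQb m) (pb m) := by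
  refine consistent_of _ _ u210 u210_anti (fun p => ?_)
  unfold vQb u210
  rw [pb_val]
  split_ifs <;> first | rfl | (exfalso; first | exact ‹False› | omega | simp_all)
lemma cons_vQc_pc : Consistent (vQc m) (pc m) := by
  refine consistent_of _ _ u210 u210_anti (fun p => ?_)
  unfold vQc u210
  rw [pc_val]
  split_ifs <;> first | rfl | (exfalso; first | exact ‹False› | omega | simp_all)
lemma cons_w01_pb : Consistent (w01 m) (pb m) := by
  refine consistent_of _ _ (uI 1) (uI_anti 1) (fun p => ?_)
  unfold w01 uI
  rw [pb_val]
  split_ifs <;> first | rfl | (exfalso; first | exact ‹False› | omega | simp_all)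
lemma cons_w02_pc : Consistent (w02 m) (pc m) := by
  refine consistent_of _ _ (uI 1) (uI_anti 1) (fun p => ?_)
  unfold w02 uI
  rw [pc_val]
  split_ifs <;> first | rfl | (exfalso; first | exact ‹False› | omega | simp_all)
lemma cons_w012_pc : Consistent (w012 m) (pc m) := by
  refine consistent_of _ _ (uI 2) (uI_anti 2) (fun p => ?_)
  unfold w012 uI
  rw [pc_val]
  split_ifs <;> first | rfl | (exfalso; first | exact ‹False› | omega | simp_all)

lemma vS_e0 : vS m (E0 m) = 1 := by simp [vS, E0]
lemma vS_e1 : vS m (E1 m) = 1 := by simp [vS, E1]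
lemma vS_e2 : vS m (E2 m) = 1 := by simp [vS, E2]
lemma vS_e3 : vS m (E3 m) = 1 := by simp [vS, E3]
lemma vQa_e0 : vQa m (E0 m) = 2 := by simp [vQa, E0]
lemma vQa_e1 : vQa m (E1 m) = 1 := by simp [vQa, E1]
lemma vQa_e2 : vQa m (E2 m) = 1 := by simp [vQa, E2]
lemma vQa_e3 : vQa m (E3 m) = 0 := by simp [vQa, E3]
lemma vQb_e0 : vQb m (E0 m) = 2 := by simp [vQb, E0]
lemma vQb_e1 : vQb m (E1 m) = 1 := by simp [vQb, E1]
lemma vQb_e2 : vQb m (E2 m) = 0 := by simp [vQb, E2]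
lemma vQb_e3 : vQb m (E3 m) = 1 := by simp [vQb, E3]
lemma vQc_e0 : vQc m (E0 m) = 1 := by simp [vQc, E0]
lemma vQc_e1 : vQc m (E1 m) = 1 := by simp [vQc, E1]
lemma vQc_e2 : vQc m (E2 m) = 2 := by simp [vQc, E2]
lemma vQc_e3 : vQc m (E3 m) = 0 := by simp [vQc, E3]
lemma w01_e0 : w01 m (E0 m) = 1 := by simp [w01, E0]
lemma w01_e1 : w01 m (E1 m) = 1 := by simp [w01, E1]
lemma w01_e2 : w01 m (E2 m) = 0 := by simp [w01, E2]
lemma w01_e3 : w01 m (E3 m) = 0 := by simp [w01, E3]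
lemma w02_e0 : w02 m (E0 m) = 1 := by simp [w02, E0]
lemma w02_e1 : w02 m (E1 m) = 0 := by simp [w02, E1]
lemma w02_e2 : w02 m (E2 m) = 1 := by simp [w02, E2]
lemma w02_e3 : w02 m (E3 m) = 0 := by simp [w02, E3]
lemma w012_e0 : w012 m (E0 m) = 1 := by simp [w012, E0]
lemma w012_e1 : w012 m (E1 m) = 1 := by simp [w012, E1]
lemma w012_e2 : w012 m (E2 m) = 1 := by simp [w012, E2]
lemma w012_e3 : w012 m (E3 m) = 0 := by simp [w012, E3]

/- Expansion of bundle values. -/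
lemma bundleVal_expand (v : Fin (m + 4) → ℝ) (hv : ∀ j : Fin (m + 4), 3 < (j : ℕ) → v j = 0)
    (f : Fin (m + 4) → Fin 2) (i : Fin 2) :
    bundleVal v (bundleOf f i) =
      (if f (E0 m) = i then v (E0 m) else 0) + (if f (E1 m) = i then v (E1 m) else 0) +
        (if f (E2 m) = i then v (E2 m) else 0) + (if f (E3 m) = i then v (E3 m) else 0) := by
  have hsub : ({E0 m, E1 m, E2 m, E3 m} : Finset (Fin (m + 4))) ⊆ Finset.univ :=
    Finset.subset_univ _
  have hout : ∀ x ∈ Finset.univ, x ∉ ({E0 m, E1 m, E2 m, E3 m} : Finset (Fin (m + 4))) →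
      (if f x = i then v x else 0) = 0 := by
    intro x _ hx
    simp only [Finset.mem_insert, Finset.mem_singleton] at hx
    push_neg at hx
    have hxv : 3 < (x : ℕ) := by
      rcases hx with ⟨h0, h1, h2, h3⟩
      have n0 : (x : ℕ) ≠ 0 := fun h => h0 (Fin.ext h)
      have n1 : (x : ℕ) ≠ 1 := fun h => h1 (Fin.ext h)
      have n2 : (x : ℕ) ≠ 2 := fun h => h2 (Fin.ext h)
      have n3 : (x : ℕ) ≠ 3 := fun h => h3 (Fin.ext h)
      omega
    rw [hv x hxv]
    simp
  have key : bundleVal v (bundleOf f i) =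
      ∑ x ∈ ({E0 m, E1 m, E2 m, E3 m} : Finset (Fin (m + 4))), (if f x = i then v x else 0) := by
    rw [bundleVal, bundleOf, Finset.sum_filter]
    exact (Finset.sum_subset hsub hout).symm
  rw [key]
  have d01 : E0 m ≠ E1 m := by simp [E0, E1, Fin.ext_iff]
  have d02 : E0 m ≠ E2 m := by simp [E0, E2, Fin.ext_iff]
  have d03 : E0 m ≠ E3 m := by simp [E0, E3, Fin.ext_iff]
  have d12 : E1 m ≠ E2 m := by simp [E1, E2, Fin.ext_iff]
  have d13 : E1 m ≠ E3 m := by simp [E1, E3, Fin.ext_iff]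
  have d23 : E2 m ≠ E3 m := by simp [E2, E3, Fin.ext_iff]
  rw [Finset.sum_insert (by simp [d01, d02, d03]),
    Finset.sum_insert (by simp [d12, d13]), Finset.sum_insert (by simp [d23]),
    Finset.sum_singleton]
  ring

/- MMS lower bounds. -/
lemma le_mms_of (v : Fin (m + 4) → ℝ) (f : Fin (m + 4) → Fin 2) (c : ℝ)
    (h : ∀ i, c ≤ bundleVal v (bundleOf f i)) : c ≤ mms 2 v := by
  rw [mms]
  exact le_trans (le_ciInf h)
    (le_ciSup (Set.Finite.bddAbove (Set.finite_range
      (fun g : Fin (m + 4) → Fin 2 => ⨅ i : Fin 2, bundleVal v (bundleOf g i)))) f)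

lemma mms_vS : (2 : ℝ) ≤ mms 2 (vS m) := by
  apply le_mms_of _ (fun j => if (j : ℕ) ≤ 1 then 0 else 1)
  intro i
  rw [bundleVal_expand _ vS_hi]
  fin_cases i <;> norm_num [E0, E1, E2, E3, vS]

lemma mms_vQa : (2 : ℝ) ≤ mms 2 (vQa m) := by
  apply le_mms_of _ (fun j => if (j : ℕ) = 0 then 0 else 1)
  intro i
  rw [bundleVal_expand _ vQa_hi]
  fin_cases i <;> norm_num [E0, E1, E2, E3, vQa]

lemma mms_vQb : (2 : ℝ) ≤ mms 2 (vQb m) := by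
  apply le_mms_of _ (fun j => if (j : ℕ) = 0 then 0 else 1)
  intro i
  rw [bundleVal_expand _ vQb_hi]
  fin_cases i <;> norm_num [E0, E1, E2, E3, vQb]

lemma mms_vQc : (2 : ℝ) ≤ mms 2 (vQc m) := by
  apply le_mms_of _ (fun j => if (j : ℕ) = 2 then 0 else 1)
  intro i
  rw [bundleVal_expand _ vQc_hi]
  fin_cases i <;> norm_num [E0, E1, E2, E3, vQc]

end Stmt9Aux


set_option maxHeartbeats 2000000 in
open Stmt9Aux in
/-- For `n = 2` players, `m ≥ 4` items and any `ε ∈ (0, 1/2]`, there is no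
truthful `(1/2 + ε)`-approximation mechanism for the ordinal model. -/
theorem stmt9 (m : ℕ) (hm : 4 ≤ m) (ε : ℝ) (hε : 0 < ε) (hε' : ε ≤ 1 / 2) :
    ¬ ∃ A : (Fin 2 → Equiv.Perm (Fin m)) → (Fin m → Fin 2),
        OrdTruthful A ∧ OrdApprox (1 / 2 + ε) A := by
  rintro ⟨A, hT, hX⟩
  obtain ⟨m', rfl⟩ : ∃ m', m = m' + 4 := ⟨m - 4, by omega⟩
  have fin2 : ∀ x : Fin 2, x = 0 ∨ x = 1 := by decide
  have ne01 : (0 : Fin 2) ≠ 1 := by decide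
  have ne10 : (1 : Fin 2) ≠ 0 := by decide
  -- generic consequences of the approximation guarantee
  have approx0 : ∀ (v₀ v₁ : Fin (m' + 4) → ℝ) (σ₀ σ₁ : Equiv.Perm (Fin (m' + 4))),
      (∀ j, 0 ≤ v₀ j) → (∀ j, 0 ≤ v₁ j) → Consistent v₀ σ₀ → Consistent v₁ σ₁ →
      2 ≤ mms 2 v₀ → 1 < bundleVal v₀ (bundleOf (A ![σ₀, σ₁]) 0) := by
    intro v₀ v₁ σ₀ σ₁ h0 h1 hc0 hc1 hm2
    have h := hX ![v₀, v₁] (by intro i j; fin_cases i <;> simp_all) ![σ₀, σ₁]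
      (by intro i; fin_cases i <;> simpa) 0
    simp only [Matrix.cons_val_zero] at h
    nlinarith [h, hm2, hε, mul_nonneg (by linarith : (0:ℝ) ≤ 1/2 + ε)
      (by linarith : (0:ℝ) ≤ mms 2 v₀ - 2)]
  have approx1 : ∀ (v₀ v₁ : Fin (m' + 4) → ℝ) (σ₀ σ₁ : Equiv.Perm (Fin (m' + 4))),
      (∀ j, 0 ≤ v₀ j) → (∀ j, 0 ≤ v₁ j) → Consistent v₀ σ₀ → Consistent v₁ σ₁ →
      2 ≤ mms 2 v₁ → 1 < bundleVal v₁ (bundleOf (A ![σ₀, σ₁]) 1) := by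
    intro v₀ v₁ σ₀ σ₁ h0 h1 hc0 hc1 hm2
    have h := hX ![v₀, v₁] (by intro i j; fin_cases i <;> simp_all) ![σ₀, σ₁]
      (by intro i; fin_cases i <;> simpa) 1
    simp only [Matrix.cons_val_one, Matrix.head_cons, Matrix.cons_val_zero] at h
    nlinarith [h, hm2, hε, mul_nonneg (by linarith : (0:ℝ) ≤ 1/2 + ε)
      (by linarith : (0:ℝ) ≤ mms 2 v₁ - 2)]
  -- the nine approximation facts
  have Fba0 := approx0 (vQb m') (vQa m') (pb m') 1 vQb_nn vQa_nn cons_vQb_pb cons_vQa_one mms_vQb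
  have Fba1 := approx1 (vQb m') (vQa m') (pb m') 1 vQb_nn vQa_nn cons_vQb_pb cons_vQa_one mms_vQa
  have FbaS := approx1 (vQb m') (vS m') (pb m') 1 vQb_nn vS_nn cons_vQb_pb cons_vS_one mms_vS
  have FbcS := approx1 (vS m') (vS m') (pb m') (pc m') vS_nn vS_nn cons_vS_pb cons_vS_pc mms_vS
  have Fcc0 := approx0 (vQc m') (vQc m') (pc m') (pc m') vQc_nn vQc_nn cons_vQc_pc cons_vQc_pc mms_vQc
  have Fcc1 := approx1 (vQc m') (vQc m') (pc m') (pc m') vQc_nn vQc_nn cons_vQc_pc cons_vQc_pc mms_vQc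
  have Fab0 := approx0 (vQa m') (vQb m') 1 (pb m') vQa_nn vQb_nn cons_vQa_one cons_vQb_pb mms_vQa
  have Fab1 := approx1 (vQa m') (vQb m') 1 (pb m') vQa_nn vQb_nn cons_vQa_one cons_vQb_pb mms_vQb
  have FabS := approx0 (vS m') (vQb m') 1 (pb m') vS_nn vQb_nn cons_vS_one cons_vQb_pb mms_vS
  rw [bundleVal_expand _ vQb_hi] at Fba0
  rw [bundleVal_expand _ vQa_hi] at Fba1
  rw [bundleVal_expand _ vS_hi] at FbaS
  rw [bundleVal_expand _ vS_hi] at FbcS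
  rw [bundleVal_expand _ vQc_hi] at Fcc0
  rw [bundleVal_expand _ vQc_hi] at Fcc1
  rw [bundleVal_expand _ vQa_hi] at Fab0
  rw [bundleVal_expand _ vQb_hi] at Fab1
  rw [bundleVal_expand _ vS_hi] at FabS
  simp only [vS_e0, vS_e1, vS_e2, vS_e3, vQa_e0, vQa_e1, vQa_e2, vQa_e3, vQb_e0, vQb_e1, vQb_e2, vQb_e3, vQc_e0, vQc_e1, vQc_e2, vQc_e3, w01_e0, w01_e1, w01_e2, w01_e3, w02_e0, w02_e1, w02_e2, w02_e3, w012_e0, w012_e1, w012_e2, w012_e3, ite_self, add_zero, zero_add] at Fba0 Fba1 FbaS FbcS Fcc0 Fcc1 Fab0 Fab1 FabS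
  -- the profile updates
  have hu1 : Function.update (![pb m', pc m'] : Fin 2 → Equiv.Perm (Fin (m' + 4))) 1
      (1 : Equiv.Perm (Fin (m' + 4))) = ![pb m', 1] := by
    funext j; fin_cases j <;> simp [Function.update]
  have hu2 : Function.update (![pb m', pc m'] : Fin 2 → Equiv.Perm (Fin (m' + 4))) 0
      (pc m') = ![pc m', pc m'] := by
    funext j; fin_cases j <;> simp [Function.update]
  have hu3 : Function.update (![pc m', pb m'] : Fin 2 → Equiv.Perm (Fin (m' + 4))) 1
      (pc m') = ![pc m', pc m'] := by
    funext j; fin_cases j <;> simp [Function.update]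
  have hu4 : Function.update (![pc m', pb m'] : Fin 2 → Equiv.Perm (Fin (m' + 4))) 0
      (1 : Equiv.Perm (Fin (m' + 4))) = ![1, pb m'] := by
    funext j; fin_cases j <;> simp [Function.update]
  -- the five truthfulness facts
  have T1 := hT ![pb m', pc m'] 1 (w012 m') w012_nn (by simpa using cons_w012_pc (m := m'))
    (1 : Equiv.Perm (Fin (m' + 4)))
  have T2 := hT ![pb m', pc m'] 0 (w01 m') w01_nn (by simpa using cons_w01_pb (m := m')) (pc m')
  have T3 := hT ![pc m', pb m'] 1 (w01 m') w01_nn (by simpa using cons_w01_pb (m := m')) (pc m')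
  have T4 := hT ![pc m', pb m'] 0 (w02 m') w02_nn (by simpa using cons_w02_pc (m := m'))
    (1 : Equiv.Perm (Fin (m' + 4)))
  have T5 := hT ![pc m', pb m'] 0 (w012 m') w012_nn (by simpa using cons_w012_pc (m := m'))
    (1 : Equiv.Perm (Fin (m' + 4)))
  rw [hu1] at T1
  rw [hu2] at T2
  rw [hu3] at T3
  rw [hu4] at T4
  rw [hu4] at T5
  rw [bundleVal_expand _ w012_hi, bundleVal_expand _ w012_hi] at T1
  rw [bundleVal_expand _ w01_hi, bundleVal_expand _ w01_hi] at T2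
  rw [bundleVal_expand _ w01_hi, bundleVal_expand _ w01_hi] at T3
  rw [bundleVal_expand _ w02_hi, bundleVal_expand _ w02_hi] at T4
  rw [bundleVal_expand _ w012_hi, bundleVal_expand _ w012_hi] at T5
  simp only [vS_e0, vS_e1, vS_e2, vS_e3, vQa_e0, vQa_e1, vQa_e2, vQa_e3, vQb_e0, vQb_e1, vQb_e2, vQb_e3, vQc_e0, vQc_e1, vQc_e2, vQc_e3, w01_e0, w01_e1, w01_e2, w01_e3, w02_e0, w02_e1, w02_e2, w02_e3, w012_e0, w012_e1, w012_e2, w012_e3, ite_self, add_zero, zero_add] at T1 T2 T3 T4 T5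
  clear hT hX approx0 approx1 hu1 hu2 hu3 hu4 hm hε hε'
  set ba0 : Fin 2 := A ![pb m', 1] (E0 m') with hba0
  clear_value ba0
  clear hba0
  set ba1 : Fin 2 := A ![pb m', 1] (E1 m') with hba1
  clear_value ba1
  clear hba1
  set ba2 : Fin 2 := A ![pb m', 1] (E2 m') with hba2
  clear_value ba2
  clear hba2
  set ba3 : Fin 2 := A ![pb m', 1] (E3 m') with hba3
  clear_value ba3
  clear hba3
  set bc0 : Fin 2 := A ![pb m', pc m'] (E0 m') with hbc0
  clear_value bc0
  clear hbc0
  set bc1 : Fin 2 := A ![pb m', pc m'] (E1 m') with hbc1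
  clear_value bc1
  clear hbc1
  set bc2 : Fin 2 := A ![pb m', pc m'] (E2 m') with hbc2
  clear_value bc2
  clear hbc2
  set bc3 : Fin 2 := A ![pb m', pc m'] (E3 m') with hbc3
  clear_value bc3
  clear hbc3
  set cc0 : Fin 2 := A ![pc m', pc m'] (E0 m') with hcc0
  clear_value cc0
  clear hcc0
  set cc1 : Fin 2 := A ![pc m', pc m'] (E1 m') with hcc1
  clear_value cc1
  clear hcc1
  set cc2 : Fin 2 := A ![pc m', pc m'] (E2 m') with hcc2
  clear_value cc2
  clear hcc2
  set cc3 : Fin 2 := A ![pc m', pc m'] (E3 m') with hcc3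
  clear_value cc3
  clear hcc3
  set cb0 : Fin 2 := A ![pc m', pb m'] (E0 m') with hcb0
  clear_value cb0
  clear hcb0
  set cb1 : Fin 2 := A ![pc m', pb m'] (E1 m') with hcb1
  clear_value cb1
  clear hcb1
  set cb2 : Fin 2 := A ![pc m', pb m'] (E2 m') with hcb2
  clear_value cb2
  clear hcb2
  set cb3 : Fin 2 := A ![pc m', pb m'] (E3 m') with hcb3
  clear_value cb3
  clear hcb3
  set ab0 : Fin 2 := A ![1, pb m'] (E0 m') with hab0
  clear_value ab0
  clear hab0
  set ab1 : Fin 2 := A ![1, pb m'] (E1 m') with hab1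
  clear_value ab1
  clear hab1
  set ab2 : Fin 2 := A ![1, pb m'] (E2 m') with hab2
  clear_value ab2
  clear hab2
  set ab3 : Fin 2 := A ![1, pb m'] (E3 m') with hab3
  clear_value ab3
  clear hab3
  -- Step A : at profile (b,a), player 2 has at least two of the items 0,1,2
  have HA : (2:ℝ) ≤ (if bc0 = 1 then 1 else 0)
      + (if bc1 = 1 then 1 else 0)
      + (if bc2 = 1 then 1 else 0) := by
    rcases fin2 ba0 with h0|h0 <;>
    rcases fin2 ba1 with h1|h1 <;>
    rcases fin2 ba2 with h2|h2 <;>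
    rcases fin2 ba3 with h3|h3 <;>
    simp_all only [ne01, ne10, ne_eq, if_true, if_false, ite_true, ite_false,
      reduceIte, not_false_iff, add_zero, zero_add, and_true, true_and] <;> linarith
  -- Step B : at profile (b,c), player 1 does not get both items 0 and 1
  have HB : (if bc0 = 0 then (1:ℝ) else 0)
      + (if bc1 = 0 then 1 else 0) ≤ 1 := by
    rcases fin2 bc0 with h0|h0 <;>
    rcases fin2 bc1 with h1|h1 <;>
    rcases fin2 bc2 with h2|h2 <;>
    rcases fin2 bc3 with h3|h3 <;>
    simp_all only [ne01, ne10, ne_eq, if_true, if_false, ite_true, ite_false,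
      reduceIte, not_false_iff, add_zero, zero_add, and_true, true_and] <;> linarith
  -- Step C : at profile (c,c), player 2 gets items 0 and 1
  have HC : cc0 = 1 ∧ cc1 = 1 := by
    rcases fin2 cc0 with h0|h0 <;>
    rcases fin2 cc1 with h1|h1 <;>
    rcases fin2 cc2 with h2|h2 <;>
    simp_all only [ne01, ne10, ne_eq, if_true, if_false, ite_true, ite_false,
      reduceIte, not_false_iff, add_zero, zero_add, and_true, true_and] <;> linarith
  -- Step D : at profile (c,b), player 2 gets items 0 and 1
  have HD : cb0 = 1 ∧ cb1 = 1 := by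
    obtain ⟨hc0, hc1⟩ := HC
    rcases fin2 cb0 with h0|h0 <;>
    rcases fin2 cb1 with h1|h1 <;>
    simp_all only [ne01, ne10, ne_eq, if_true, if_false, ite_true, ite_false,
      reduceIte, not_false_iff, add_zero, zero_add, and_true, true_and] <;> linarith
  -- Step E : contradiction at profile (a,b)
  obtain ⟨hd0, hd1⟩ := HD
  rcases fin2 ab0 with h0|h0 <;>
  rcases fin2 ab1 with h1|h1 <;>
  rcases fin2 ab2 with h2|h2 <;>
  rcases fin2 ab3 with h3|h3 <;>
  rcases fin2 cb2 with h4|h4 <;>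
  simp_all only [ne01, ne10, ne_eq, if_true, if_false, ite_true, ite_false,
      reduceIte, not_false_iff, add_zero, zero_add, and_true, true_and] <;> linarith
end

section
/- For n = 3 players, m = 6 items, and every ε > 0, no mechanism for the ordinal model (whether truthful or not) is a (1/2 + ε)-approximation. -/
open Finset

lemma mms_ge_partition {m n : ℕ} (v : Fin m → ℝ) (g : Fin m → Fin n) :
    (⨅ i : Fin n, bundleVal v (bundleOf g i)) ≤ mms n v := by
  unfold mms
  exact le_ciSup (f := fun g : Fin m → Fin n => ⨅ i : Fin n, bundleVal v (bundleOf g i))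
    (Set.Finite.bddAbove (Set.finite_range _)) g

/-- For `n = 3` players, `m = 6` items and every `ε > 0`, no mechanism for the
ordinal model (truthful or not) is a `(1/2 + ε)`-approximation. -/
theorem stmt11 (ε : ℝ) (hε : 0 < ε) :
    ¬ ∃ A : (Fin 3 → Equiv.Perm (Fin 6)) → (Fin 6 → Fin 3),
        OrdApprox (1 / 2 + ε) A := by
  rintro ⟨A, hA⟩
  set R : Fin 3 → Equiv.Perm (Fin 6) := fun _ => 1 with hR
  set f := A R with hf
  have hρpos : (0:ℝ) < 1 / 2 + ε := by linarith
  -- Step 1: with the all-ones valuation, every player gets exactly 2 items.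
  have hcons1 : ∀ i, Consistent (fun _ : Fin 6 => (1:ℝ)) (R i) := fun _ _ _ _ => le_refl _
  have hones := hA (fun _ _ => 1) (fun _ _ => zero_le_one) R hcons1
  have hmms1 : (2:ℝ) ≤ mms 3 (fun _ : Fin 6 => (1:ℝ)) := by
    refine le_trans ?_ (mms_ge_partition _ (fun j : Fin 6 => (⟨j.val / 2, by omega⟩ : Fin 3)))
    refine le_ciInf fun i => ?_
    have h1 : bundleVal (fun _ : Fin 6 => (1:ℝ))
        (bundleOf (fun j : Fin 6 => (⟨j.val / 2, by omega⟩ : Fin 3)) i)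
        = ((bundleOf (fun j : Fin 6 => (⟨j.val / 2, by omega⟩ : Fin 3)) i).card : ℝ) := by
      simp [bundleVal]
    rw [h1]
    have h2 : (bundleOf (fun j : Fin 6 => (⟨j.val / 2, by omega⟩ : Fin 3)) i).card = 2 := by
      fin_cases i <;> decide
    rw [h2]; norm_num
  have hcard : ∀ i, 2 ≤ (bundleOf f i).card := by
    intro i
    have h1 := hones i
    have hv : bundleVal (fun _ : Fin 6 => (1:ℝ)) (bundleOf f i) = ((bundleOf f i).card : ℝ) := by
      simp [bundleVal]
    rw [hv] at h1
    have h3 : (1:ℝ) < ((bundleOf f i).card : ℝ) := by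
      have := mul_le_mul_of_nonneg_left hmms1 hρpos.le
      nlinarith
    have h4 : 1 < (bundleOf f i).card := by exact_mod_cast h3
    omega
  have hsum : ∑ i : Fin 3, (bundleOf f i).card = 6 := by
    have h := Finset.card_eq_sum_card_fiberwise
      (fun (x : Fin 6) (_ : x ∈ (Finset.univ : Finset (Fin 6))) => Finset.mem_univ (f x))
    simpa [bundleOf] using h.symm
  have hc2 : ∀ i, (bundleOf f i).card = 2 := by
    have h0 := hcard 0; have h1 := hcard 1; have h2 := hcard 2
    rw [Fin.sum_univ_three] at hsum
    intro k
    fin_cases k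
    · show (bundleOf f 0).card = 2; omega
    · show (bundleOf f 1).card = 2; omega
    · show (bundleOf f 2).card = 2; omega
  -- pick a player receiving neither of the top two items
  obtain ⟨i, hi0, hi1⟩ : ∃ i : Fin 3, i ≠ f 0 ∧ i ≠ f 1 := by
    have h : ∀ a b : Fin 3, ∃ i, i ≠ a ∧ i ≠ b := by decide
    exact h _ _
  -- Step 2: player i values the top two items 1 and the rest 1/4.
  set v : Fin 6 → ℝ := fun j => if j.val < 2 then 1 else 1/4 with hvdef
  set V2 : Fin 3 → Fin 6 → ℝ := fun i' j => if i' = i then v j else 1 with hV2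
  have hV2nonneg : ∀ i' j, 0 ≤ V2 i' j := by
    intro i' j; simp only [hV2, hvdef]; split_ifs <;> norm_num
  have hV2cons : ∀ i', Consistent (V2 i') (R i') := by
    intro i' k l hkl
    have hkl' : k.val ≤ l.val := hkl
    simp only [hR, Equiv.Perm.coe_one, id_eq, hV2, hvdef]
    split_ifs <;> norm_num <;> omega
  have hstep2 := hA V2 hV2nonneg R hV2cons i
  have hV2i : V2 i = v := by funext j; simp [hV2]
  rw [hV2i] at hstep2
  -- mms of v is at least 1
  have hmmsv : (1:ℝ) ≤ mms 3 v := by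
    set g2 : Fin 6 → Fin 3 := fun j => if j.val = 0 then 0 else if j.val = 1 then 1 else 2
      with hg2
    refine le_trans ?_ (mms_ge_partition v g2)
    refine le_ciInf fun k => ?_
    have hb : ∀ k : Fin 3, bundleOf g2 k
        = if k = 0 then {0} else if k = 1 then ({1} : Finset (Fin 6)) else {2, 3, 4, 5} := by
      decide
    rw [hb k]
    split_ifs
    · norm_num [bundleVal, hvdef]
    · norm_num [bundleVal, hvdef]
    · rw [bundleVal, Finset.sum_insert (by decide), Finset.sum_insert (by decide),
        Finset.sum_insert (by decide), Finset.sum_singleton]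
      norm_num [hvdef, show ((2:Fin 6):ℕ) = 2 from rfl, show ((3:Fin 6):ℕ) = 3 from rfl,
        show ((4:Fin 6):ℕ) = 4 from rfl, show ((5:Fin 6):ℕ) = 5 from rfl]
  -- player i's bundle is worth exactly 1/2
  have hlow : ∀ j ∈ bundleOf f i, v j = 1/4 := by
    intro j hj
    simp only [bundleOf, Finset.mem_filter, Finset.mem_univ, true_and] at hj
    have hj0 : j ≠ 0 := by rintro rfl; exact hi0 hj.symm
    have hj1 : j ≠ 1 := by rintro rfl; exact hi1 hj.symm
    have hkey : ∀ j : Fin 6, j ≠ 0 → j ≠ 1 → 2 ≤ j.val := by decide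
    have h2 : 2 ≤ j.val := hkey j hj0 hj1
    simp only [hvdef]
    rw [if_neg (by omega)]
  have hval : bundleVal v (bundleOf f i) = 1/2 := by
    rw [bundleVal, Finset.sum_congr rfl hlow, Finset.sum_const, hc2 i]
    norm_num
  rw [hval] at hstep2
  have := mul_le_mul_of_nonneg_left hmmsv hρpos.le
  nlinarith
end

section
/- Let n = 2 and m = 4, and fix any publicly known rankings ≽_1, ≽_2 on the four items; let B_i(k) denote the item in position k of ≽_i. Consider the mechanism defined on valuation matrices consistent with (≽_1, ≽_2) as follows: if B_1(1) ≠ B_2(1), allocate by the picking sequence p_1 p_2 p_2 p_1, where at each turn the player takes her highest-ranked remaining item; otherwise, give player 1 whichever of the bundles {B_1(1)} and {B_1(2), B_1(3)} has the larger value according to her reported valuation, and give player 2 the remaining items. This mechanism is truthful for the public rankings model, and on every consistent valuation matrix its output allocation (T_1, T_2) satisfies v_i(T_i) ≥ μ_i(2, M) for i = 1, 2 (i.e., it is an exact maximin share allocation). -/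
open Finset

/-- The mechanism `M_PR-exact` for two players and four items, with publicly known rankings `R`:
if the two players' top items differ, allocate by the picking sequence `p₁ p₂ p₂ p₁` (each
player taking her highest-ranked remaining item); otherwise give player `1` the better (for her
reported valuation) of the bundles `{B₁(1)}` and `{B₁(2), B₁(3)}` and give player `2` the rest.
Here `R i k` is the item in position `k` of player `i`'s ranking. -/
noncomputable def mechPRexact (R : Fin 2 → Equiv.Perm (Fin 4)) (V : Fin 2 → Fin 4 → ℝ) :
    Fin 4 → Option (Fin 2) :=
  if R 0 0 = R 1 0 then
    if V 0 (R 0 1) + V 0 (R 0 2) ≤ V 0 (R 0 0) then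
      fun j => if j = R 0 0 then some 0 else some 1
    else
      fun j => if j = R 0 1 ∨ j = R 0 2 then some 0 else some 1
  else pickAllocList R [0, 1, 1, 0] Finset.univ

lemma fin2cases (x : Fin 2) : x = 0 ∨ x = 1 := by omega

lemma mms_le_of (v : Fin 4 → ℝ) (T : ℝ)
    (h : ∀ f : Fin 4 → Fin 2, ∃ i, bundleVal v (bundleOf f i) ≤ T) : mms 2 v ≤ T := by
  apply ciSup_le
  intro f
  obtain ⟨i, hi⟩ := h f
  exact le_trans (ciInf_le (Set.Finite.bddBelow (Set.finite_range _)) i) hi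

lemma sum_bundle (v : Fin 4 → ℝ) (σ : Equiv.Perm (Fin 4)) (f : Fin 4 → Fin 2) (i : Fin 2) :
    bundleVal v (bundleOf f i) = ∑ k : Fin 4, if f (σ k) = i then v (σ k) else 0 := by
  rw [bundleVal, bundleOf, Finset.sum_filter]
  exact (Equiv.sum_comp σ fun j => if f j = i then v j else 0).symm

lemma mms_bound (v : Fin 4 → ℝ) (σ : Equiv.Perm (Fin 4)) (T : ℝ)
    (hT : ∀ g : Fin 4 → Fin 2, ∃ i : Fin 2,
      ((if g 0 = i then v (σ 0) else 0) + (if g 1 = i then v (σ 1) else 0) +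
       (if g 2 = i then v (σ 2) else 0) + (if g 3 = i then v (σ 3) else 0)) ≤ T) :
    mms 2 v ≤ T := by
  apply mms_le_of
  intro f
  obtain ⟨i, hi⟩ := hT (fun k => f (σ k))
  refine ⟨i, ?_⟩
  rw [sum_bundle v σ f i, Fin.sum_univ_four]
  exact hi

section core
variable {w : Fin 4 → ℝ} {T : ℝ}
  (h01 : w 1 ≤ w 0) (h12 : w 2 ≤ w 1) (h23 : w 3 ≤ w 2) (h3 : 0 ≤ w 3)

include h01 h12 h23 h3 in
lemma core1 (hT : w 0 + w 3 ≤ T) : ∀ g : Fin 4 → Fin 2, ∃ i : Fin 2,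
    ((if g 0 = i then w 0 else 0) + (if g 1 = i then w 1 else 0) +
     (if g 2 = i then w 2 else 0) + (if g 3 = i then w 3 else 0)) ≤ T := by
  intro g
  rcases fin2cases (g 0) with e0 | e0 <;> rcases fin2cases (g 1) with e1 | e1 <;>
    rcases fin2cases (g 2) with e2 | e2 <;> rcases fin2cases (g 3) with e3 | e3 <;>
    simp only [e0, e1, e2, e3] <;>
    first
      | (refine ⟨0, ?_⟩; norm_num <;> linarith)
      | (refine ⟨1, ?_⟩; norm_num <;> linarith)
      | (refine ⟨0, ?_⟩; linarith)
      | (refine ⟨1, ?_⟩; linarith)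

include h01 h12 h23 h3 in
lemma core2 (hT : w 0 + w 2 ≤ T) : ∀ g : Fin 4 → Fin 2, ∃ i : Fin 2,
    ((if g 0 = i then w 0 else 0) + (if g 1 = i then w 1 else 0) +
     (if g 2 = i then w 2 else 0) + (if g 3 = i then w 3 else 0)) ≤ T := by
  intro g
  rcases fin2cases (g 0) with e0 | e0 <;> rcases fin2cases (g 1) with e1 | e1 <;>
    rcases fin2cases (g 2) with e2 | e2 <;> rcases fin2cases (g 3) with e3 | e3 <;>
    simp only [e0, e1, e2, e3] <;>
    first
      | (refine ⟨0, ?_⟩; norm_num <;> linarith)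
      | (refine ⟨1, ?_⟩; norm_num <;> linarith)
      | (refine ⟨0, ?_⟩; linarith)
      | (refine ⟨1, ?_⟩; linarith)

include h01 h12 h23 h3 in
lemma core3 (hTa : w 0 ≤ T) (hTb : w 1 + w 2 ≤ T) : ∀ g : Fin 4 → Fin 2, ∃ i : Fin 2,
    ((if g 0 = i then w 0 else 0) + (if g 1 = i then w 1 else 0) +
     (if g 2 = i then w 2 else 0) + (if g 3 = i then w 3 else 0)) ≤ T := by
  intro g
  rcases fin2cases (g 0) with e0 | e0 <;> rcases fin2cases (g 1) with e1 | e1 <;>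
    rcases fin2cases (g 2) with e2 | e2 <;> rcases fin2cases (g 3) with e3 | e3 <;>
    simp only [e0, e1, e2, e3] <;>
    first
      | (refine ⟨0, ?_⟩; norm_num <;> linarith)
      | (refine ⟨1, ?_⟩; norm_num <;> linarith)
      | (refine ⟨0, ?_⟩; linarith)
      | (refine ⟨1, ?_⟩; linarith)

include h01 h12 h23 h3 in
lemma core4 (hT : w 1 + w 2 + w 3 ≤ T) : ∀ g : Fin 4 → Fin 2, ∃ i : Fin 2,
    ((if g 0 = i then w 0 else 0) + (if g 1 = i then w 1 else 0) +
     (if g 2 = i then w 2 else 0) + (if g 3 = i then w 3 else 0)) ≤ T := by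
  intro g
  rcases fin2cases (g 0) with e0 | e0 <;> rcases fin2cases (g 1) with e1 | e1 <;>
    rcases fin2cases (g 2) with e2 | e2 <;> rcases fin2cases (g 3) with e3 | e3 <;>
    simp only [e0, e1, e2, e3] <;>
    first
      | (refine ⟨0, ?_⟩; norm_num <;> linarith)
      | (refine ⟨1, ?_⟩; norm_num <;> linarith)
      | (refine ⟨0, ?_⟩; linarith)
      | (refine ⟨1, ?_⟩; linarith)
end core

lemma bestItem_mem {m : ℕ} (σ : Equiv.Perm (Fin m)) (S : Finset (Fin m)) (h : S.Nonempty) :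
    bestItem σ S h ∈ S := by
  rw [bestItem]
  have hm := Finset.min'_mem (S.image σ.symm) (h.image σ.symm)
  obtain ⟨j, hj, hje⟩ := Finset.mem_image.mp hm
  rw [← hje, Equiv.apply_symm_apply]
  exact hj

lemma bestItem_min {m : ℕ} (σ : Equiv.Perm (Fin m)) (S : Finset (Fin m)) (h : S.Nonempty)
    {j : Fin m} (hj : j ∈ S) : σ.symm (bestItem σ S h) ≤ σ.symm j := by
  rw [bestItem, Equiv.symm_apply_apply]
  exact Finset.min'_le _ _ (Finset.mem_image_of_mem _ hj)

lemma bestItem_eq (σ : Equiv.Perm (Fin 4)) (S : Finset (Fin 4)) (h : S.Nonempty)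
    (hmem : σ 0 ∈ S) : bestItem σ S h = σ 0 := by
  have h1 : σ.symm (bestItem σ S h) ≤ σ.symm (σ 0) := bestItem_min σ S h hmem
  rw [Equiv.symm_apply_apply] at h1
  have h2 : σ.symm (bestItem σ S h) = 0 := le_antisymm h1 (Fin.zero_le _)
  have := congrArg σ h2
  rwa [Equiv.apply_symm_apply] at this

lemma pickCons {n m : ℕ} (R : Fin n → Equiv.Perm (Fin m)) (p : Fin n) (rest : List (Fin n))
    (S : Finset (Fin m)) (h : S.Nonempty) :
    pickAllocList R (p :: rest) S =
      Function.update (pickAllocList R rest (S.erase (bestItem (R p) S h)))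
        (bestItem (R p) S h) (some p) := by
  rw [pickAllocList, dif_pos h]

lemma pickNil {n m : ℕ} (R : Fin n → Equiv.Perm (Fin m)) (S : Finset (Fin m)) :
    pickAllocList R [] S = fun _ => none := by
  rw [pickAllocList]

lemma perm_cases (σ : Equiv.Perm (Fin 4)) (j : Fin 4) :
    j = σ 0 ∨ j = σ 1 ∨ j = σ 2 ∨ j = σ 3 := by
  have h := σ.apply_symm_apply j
  have h4 : σ.symm j = 0 ∨ σ.symm j = 1 ∨ σ.symm j = 2 ∨ σ.symm j = 3 := by omega
  rcases h4 with h'|h'|h'|h' <;> rw [h'] at h <;> tauto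


lemma pickA (R : Fin 2 → Equiv.Perm (Fin 4)) (hA : R 0 0 ≠ R 1 0) :
    ∃ x y : Fin 4,
      (R 1).symm x ≤ 2 ∧ x ≠ R 0 0 ∧ x ≠ R 1 0 ∧ y ≠ R 0 0 ∧ y ≠ R 1 0 ∧ y ≠ x ∧
      obundleOf (pickAllocList R [0, 1, 1, 0] Finset.univ) 0 = {R 0 0, y} ∧
      obundleOf (pickAllocList R [0, 1, 1, 0] Finset.univ) 1 = {R 1 0, x} := by
  have hba : R 1 0 ≠ R 0 0 := Ne.symm hA
  have h4 : (Finset.univ : Finset (Fin 4)).Nonempty := Finset.univ_nonempty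
  have e0 : bestItem (R 0) Finset.univ h4 = R 0 0 := bestItem_eq _ _ _ (Finset.mem_univ _)
  have hS1ne : (Finset.univ.erase (R 0 0)).Nonempty :=
    ⟨R 1 0, Finset.mem_erase.mpr ⟨hba, Finset.mem_univ _⟩⟩
  have e1 : bestItem (R 1) (Finset.univ.erase (R 0 0)) hS1ne = R 1 0 :=
    bestItem_eq _ _ _ (Finset.mem_erase.mpr ⟨hba, Finset.mem_univ _⟩)
  -- a witness in S2 with rank ≤ 2 for player 1
  have hj : ∃ j, j ∈ (Finset.univ.erase (R 0 0)).erase (R 1 0) ∧ (R 1).symm j ≤ 2 := by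
    by_cases hc : R 1 1 = R 0 0
    · refine ⟨R 1 2, Finset.mem_erase.mpr ⟨(R 1).injective.ne (by decide),
        Finset.mem_erase.mpr ⟨hc ▸ (R 1).injective.ne (by decide), Finset.mem_univ _⟩⟩, ?_⟩
      rw [Equiv.symm_apply_apply]
    · exact ⟨R 1 1, Finset.mem_erase.mpr ⟨(R 1).injective.ne (by decide),
        Finset.mem_erase.mpr ⟨hc, Finset.mem_univ _⟩⟩, by rw [Equiv.symm_apply_apply]; decide⟩
  obtain ⟨j, hjmem, hjr⟩ := hj
  have hS2ne : ((Finset.univ.erase (R 0 0)).erase (R 1 0)).Nonempty := ⟨j, hjmem⟩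
  set x := bestItem (R 1) ((Finset.univ.erase (R 0 0)).erase (R 1 0)) hS2ne with hxdef
  have hxmem := bestItem_mem (R 1) _ hS2ne
  rw [← hxdef] at hxmem
  have hxb : x ≠ R 1 0 := (Finset.mem_erase.mp hxmem).1
  have hxa : x ≠ R 0 0 := (Finset.mem_erase.mp (Finset.mem_erase.mp hxmem).2).1
  have hxr : (R 1).symm x ≤ 2 := le_trans (bestItem_min (R 1) _ hS2ne hjmem) hjr
  have hS3ne : (((Finset.univ.erase (R 0 0)).erase (R 1 0)).erase x).Nonempty := by
    rw [← Finset.card_pos, Finset.card_erase_of_mem hxmem,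
      Finset.card_erase_of_mem (Finset.mem_erase.mpr ⟨hba, Finset.mem_univ _⟩),
      Finset.card_erase_of_mem (Finset.mem_univ _)]
    simp
  set y := bestItem (R 0) (((Finset.univ.erase (R 0 0)).erase (R 1 0)).erase x) hS3ne with hydef
  have hymem := bestItem_mem (R 0) _ hS3ne
  rw [← hydef] at hymem
  have hyx : y ≠ x := (Finset.mem_erase.mp hymem).1
  have hyb : y ≠ R 1 0 := (Finset.mem_erase.mp (Finset.mem_erase.mp hymem).2).1
  have hya : y ≠ R 0 0 :=
    (Finset.mem_erase.mp (Finset.mem_erase.mp (Finset.mem_erase.mp hymem).2).2).1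
  have hcard : (((Finset.univ.erase (R 0 0)).erase (R 1 0)).erase x).card = 1 := by
    rw [Finset.card_erase_of_mem hxmem,
      Finset.card_erase_of_mem (Finset.mem_erase.mpr ⟨hba, Finset.mem_univ _⟩),
      Finset.card_erase_of_mem (Finset.mem_univ _)]
    simp
  have hsing : ((Finset.univ.erase (R 0 0)).erase (R 1 0)).erase x = {y} := by
    obtain ⟨z, hz⟩ := Finset.card_eq_one.mp hcard
    rw [hz] at hymem ⊢
    rw [Finset.mem_singleton] at hymem
    rw [hymem]
  have huniv : ∀ k : Fin 4, k = R 0 0 ∨ k = R 1 0 ∨ k = x ∨ k = y := by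
    intro k
    by_cases h1 : k = R 0 0
    · exact Or.inl h1
    by_cases h2 : k = R 1 0
    · exact Or.inr (Or.inl h2)
    by_cases h3 : k = x
    · exact Or.inr (Or.inr (Or.inl h3))
    have : k ∈ ((Finset.univ.erase (R 0 0)).erase (R 1 0)).erase x :=
      Finset.mem_erase.mpr ⟨h3, Finset.mem_erase.mpr ⟨h2,
        Finset.mem_erase.mpr ⟨h1, Finset.mem_univ _⟩⟩⟩
    rw [hsing, Finset.mem_singleton] at this
    exact Or.inr (Or.inr (Or.inr this))
  have eα : pickAllocList R [0, 1, 1, 0] Finset.univ =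
      Function.update (Function.update (Function.update (Function.update
        (fun _ => none) y (some 0)) x (some 1)) (R 1 0) (some 1)) (R 0 0) (some 0) := by
    rw [pickCons R 0 [1, 1, 0] Finset.univ h4, e0,
        pickCons R 1 [1, 0] _ hS1ne, e1,
        pickCons R 1 [0] _ hS2ne, ← hxdef,
        pickCons R 0 [] _ hS3ne, ← hydef, pickNil]
  refine ⟨x, y, hxr, hxa, hxb, hya, hyb, hyx, ?_, ?_⟩
  · ext k
    rw [eα]
    rcases huniv k with rfl | rfl | rfl | rfl <;>
      simp [obundleOf, Function.update_apply, hba, hxa, hxb, hya, hyb, hyx,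
        Ne.symm hba, Ne.symm hxa, Ne.symm hxb, Ne.symm hya, Ne.symm hyb, Ne.symm hyx, hA]
  · ext k
    rw [eα]
    rcases huniv k with rfl | rfl | rfl | rfl <;>
      simp [obundleOf, Function.update_apply, hba, hxa, hxb, hya, hyb, hyx,
        Ne.symm hba, Ne.symm hxa, Ne.symm hxb, Ne.symm hya, Ne.symm hyb, Ne.symm hyx, hA]


lemma obundle_if1 (a : Fin 4) :
    obundleOf (fun j => if j = a then some 0 else some (1 : Fin 2)) 0 = {a} := by
  ext k
  by_cases h : k = a <;> simp [obundleOf, h]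

lemma obundle_if1' (a : Fin 4) :
    obundleOf (fun j => if j = a then some 0 else some (1 : Fin 2)) 1 = Finset.univ.erase a := by
  ext k
  by_cases h : k = a <;> simp [obundleOf, h]

lemma obundle_if2 (b c : Fin 4) :
    obundleOf (fun j => if j = b ∨ j = c then some 0 else some (1 : Fin 2)) 0 = {b, c} := by
  ext k
  by_cases hb : k = b <;> by_cases hc : k = c <;> simp [obundleOf, hb, hc]

lemma obundle_if2' (b c : Fin 4) :
    obundleOf (fun j => if j = b ∨ j = c then some 0 else some (1 : Fin 2)) 1 =
      (Finset.univ.erase b).erase c := by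
  ext k
  by_cases hb : k = b <;> by_cases hc : k = c <;> simp [obundleOf, hb, hc]

lemma erase_top (σ : Equiv.Perm (Fin 4)) :
    Finset.univ.erase (σ 0) = {σ 1, σ 2, σ 3} := by
  ext k
  rcases perm_cases σ k with rfl | rfl | rfl | rfl <;>
    simp [σ.injective.ne (show (0:Fin 4) ≠ 1 by decide), σ.injective.ne (show (0:Fin 4) ≠ 2 by decide),
      σ.injective.ne (show (0:Fin 4) ≠ 3 by decide), σ.injective.ne (show (1:Fin 4) ≠ 0 by decide),
      σ.injective.ne (show (1:Fin 4) ≠ 2 by decide), σ.injective.ne (show (1:Fin 4) ≠ 3 by decide),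
      σ.injective.ne (show (2:Fin 4) ≠ 0 by decide), σ.injective.ne (show (2:Fin 4) ≠ 1 by decide),
      σ.injective.ne (show (2:Fin 4) ≠ 3 by decide), σ.injective.ne (show (3:Fin 4) ≠ 0 by decide),
      σ.injective.ne (show (3:Fin 4) ≠ 1 by decide), σ.injective.ne (show (3:Fin 4) ≠ 2 by decide)]

lemma erase_mid (σ : Equiv.Perm (Fin 4)) :
    (Finset.univ.erase (σ 1)).erase (σ 2) = {σ 0, σ 3} := by
  ext k
  rcases perm_cases σ k with rfl | rfl | rfl | rfl <;>
    simp [σ.injective.ne (show (0:Fin 4) ≠ 1 by decide), σ.injective.ne (show (0:Fin 4) ≠ 2 by decide),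
      σ.injective.ne (show (0:Fin 4) ≠ 3 by decide), σ.injective.ne (show (1:Fin 4) ≠ 0 by decide),
      σ.injective.ne (show (1:Fin 4) ≠ 2 by decide), σ.injective.ne (show (1:Fin 4) ≠ 3 by decide),
      σ.injective.ne (show (2:Fin 4) ≠ 0 by decide), σ.injective.ne (show (2:Fin 4) ≠ 1 by decide),
      σ.injective.ne (show (2:Fin 4) ≠ 3 by decide), σ.injective.ne (show (3:Fin 4) ≠ 0 by decide),
      σ.injective.ne (show (3:Fin 4) ≠ 1 by decide), σ.injective.ne (show (3:Fin 4) ≠ 2 by decide)]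

lemma cons_last {v : Fin 4 → ℝ} {σ : Equiv.Perm (Fin 4)} (hc : Consistent v σ) (j : Fin 4) :
    v (σ 3) ≤ v j := by
  have h := hc (σ.symm j) 3 (Fin.le_last _)
  rwa [Equiv.apply_symm_apply] at h

lemma cons_two {v : Fin 4 → ℝ} {σ : Equiv.Perm (Fin 4)} (hc : Consistent v σ) {x : Fin 4}
    (hx : σ.symm x ≤ 2) : v (σ 2) ≤ v x := by
  have h := hc (σ.symm x) 2 hx
  rwa [Equiv.apply_symm_apply] at h

/-- For `n = 2` players and `m = 4` items with publicly known rankings `R`,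
the mechanism `M_PR-exact` is truthful for the public rankings model and always outputs an exact
maximin share allocation. -/
theorem stmt12 (R : Fin 2 → Equiv.Perm (Fin 4)) :
    PRTruthfulO R (mechPRexact R) ∧
    (∀ V : Fin 2 → Fin 4 → ℝ, (∀ i j, 0 ≤ V i j) → (∀ i, Consistent (V i) (R i)) →
      ∀ i : Fin 2, mms 2 (V i) ≤ bundleVal (V i) (obundleOf (mechPRexact R V) i)) := by
  have hbc : R 0 1 ≠ R 0 2 := (R 0).injective.ne (by decide)
  have had : R 0 0 ≠ R 0 3 := (R 0).injective.ne (by decide)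
  constructor
  · -- Truthfulness
    intro V hV hC i v' hv' hc'
    by_cases hA : R 0 0 = R 1 0
    · rcases fin2cases i with rfl | rfl
      · -- player 0 deviates
        simp only [mechPRexact, if_pos hA, Function.update_self]
        by_cases h2 : V 0 (R 0 1) + V 0 (R 0 2) ≤ V 0 (R 0 0)
        · rw [if_pos h2]
          by_cases h1 : v' (R 0 1) + v' (R 0 2) ≤ v' (R 0 0)
          · rw [if_pos h1]
          · rw [if_neg h1, obundle_if1, obundle_if2, bundleVal, bundleVal,
              Finset.sum_singleton, Finset.sum_pair hbc]
            linarith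
        · rw [if_neg h2]
          by_cases h1 : v' (R 0 1) + v' (R 0 2) ≤ v' (R 0 0)
          · rw [if_pos h1, obundle_if1, obundle_if2, bundleVal, bundleVal,
              Finset.sum_singleton, Finset.sum_pair hbc]
            linarith [not_le.mp h2]
          · rw [if_neg h1]
      · -- player 1 deviates: allocation unchanged
        have hup : Function.update V 1 v' 0 = V 0 := Function.update_of_ne (by decide) _ _
        simp only [mechPRexact, if_pos hA, hup]
        exact le_rfl
    · -- different tops: allocation is independent of the reports
      simp only [mechPRexact, if_neg hA]
      exact le_rfl
  · -- MMS guarantee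
    intro V hV hC i
    have h01₀ : V 0 (R 0 1) ≤ V 0 (R 0 0) := hC 0 0 1 (by decide)
    have h12₀ : V 0 (R 0 2) ≤ V 0 (R 0 1) := hC 0 1 2 (by decide)
    have h23₀ : V 0 (R 0 3) ≤ V 0 (R 0 2) := hC 0 2 3 (by decide)
    have h3₀ : (0:ℝ) ≤ V 0 (R 0 3) := hV 0 _
    have h01₁ : V 1 (R 1 1) ≤ V 1 (R 1 0) := hC 1 0 1 (by decide)
    have h12₁ : V 1 (R 1 2) ≤ V 1 (R 1 1) := hC 1 1 2 (by decide)
    have h23₁ : V 1 (R 1 3) ≤ V 1 (R 1 2) := hC 1 2 3 (by decide)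
    have h3₁ : (0:ℝ) ≤ V 1 (R 1 3) := hV 1 _
    by_cases hA : R 0 0 = R 1 0
    · simp only [mechPRexact, if_pos hA]
      by_cases hT : V 0 (R 0 1) + V 0 (R 0 2) ≤ V 0 (R 0 0) <;>
        [rw [if_pos hT]; rw [if_neg hT]] <;> rcases fin2cases i with rfl | rfl
      · -- player 0 gets {R 0 0}
        rw [obundle_if1, bundleVal, Finset.sum_singleton]
        exact mms_bound (V 0) (R 0) _
          (core3 (w := fun k => V 0 (R 0 k)) (T := V 0 (R 0 0)) h01₀ h12₀ h23₀ h3₀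
            le_rfl (by beta_reduce; linarith))
      · -- player 1 gets the rest
        rw [obundle_if1', hA, erase_top (R 1), bundleVal]
        rw [Finset.sum_insert (by
          simp [(R 1).injective.ne (show (1:Fin 4) ≠ 2 by decide),
            (R 1).injective.ne (show (1:Fin 4) ≠ 3 by decide)]),
          Finset.sum_pair ((R 1).injective.ne (by decide))]
        exact mms_bound (V 1) (R 1) _
          (core4 (w := fun k => V 1 (R 1 k)) (T := V 1 (R 1 1) + (V 1 (R 1 2) + V 1 (R 1 3)))
            h01₁ h12₁ h23₁ h3₁ (by beta_reduce; linarith))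
      · -- player 0 gets {R 0 1, R 0 2}
        rw [obundle_if2, bundleVal, Finset.sum_pair hbc]
        exact mms_bound (V 0) (R 0) _
          (core3 (w := fun k => V 0 (R 0 k)) (T := V 0 (R 0 1) + V 0 (R 0 2)) h01₀ h12₀ h23₀ h3₀
            (by beta_reduce; linarith [not_le.mp hT]) le_rfl)
      · -- player 1 gets {R 0 0, R 0 3}
        rw [obundle_if2', erase_mid (R 0), bundleVal, Finset.sum_pair had]
        have hd : V 1 (R 1 3) ≤ V 1 (R 0 3) := cons_last (hC 1) _
        have ha : V 1 (R 1 0) = V 1 (R 0 0) := by rw [hA]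
        exact mms_bound (V 1) (R 1) _
          (core1 (w := fun k => V 1 (R 1 k)) (T := V 1 (R 0 0) + V 1 (R 0 3)) h01₁ h12₁ h23₁ h3₁
            (by beta_reduce; linarith))
    · -- different tops: picking sequence
      obtain ⟨x, y, hxr, hxa, hxb, hya, hyb, hyx, hb0, hb1⟩ := pickA R hA
      simp only [mechPRexact, if_neg hA]
      rcases fin2cases i with rfl | rfl
      · rw [hb0, bundleVal, Finset.sum_pair (Ne.symm hya)]
        have hy : V 0 (R 0 3) ≤ V 0 y := cons_last (hC 0) _
        exact mms_bound (V 0) (R 0) _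
          (core1 (w := fun k => V 0 (R 0 k)) (T := V 0 (R 0 0) + V 0 y) h01₀ h12₀ h23₀ h3₀
            (by beta_reduce; linarith))
      · rw [hb1, bundleVal, Finset.sum_pair (Ne.symm hxb)]
        have hx : V 1 (R 1 2) ≤ V 1 x := cons_two (hC 1) hxr
        exact mms_bound (V 1) (R 1) _
          (core2 (w := fun k => V 1 (R 1 k)) (T := V 1 (R 1 0) + V 1 x) h01₁ h12₁ h23₁ h3₁
            (by beta_reduce; linarith))
end

section
/- For n = 2 players, m = 5 items, any strict total order ≽ on the five items, and any ε ∈ (0, 1/6], there is no truthful (5/6 + ε)-approximation mechanism for the public rankings model in which the publicly known ranking of both players equals ≽. -/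
open Finset

section Stmt13Aux

/-! Auxiliary machinery: we work with valuations given by natural-number values on
*rank positions*, transported to items via the common ranking `r`. -/

/-- Sum of position-values of the positions assigned to player `i` by the
position-allocation `g`. -/
def ivalN (x : Fin 5 → ℕ) (g : Fin 5 → Fin 2) (i : Fin 2) : ℕ :=
  ∑ k ∈ Finset.univ.filter fun k => g k = i, x k

def nva : Fin 5 → ℕ := ![3,3,2,1,1]
def nvb : Fin 5 → ℕ := ![4,1,1,1,1]
def nvc : Fin 5 → ℕ := ![4,2,2,1,1]

/-- The unary (approximation) constraint, in integer form. -/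
abbrev UU (x : Fin 5 → ℕ) (Mx : ℕ) (y : Fin 5 → ℕ) (My : ℕ) (g : Fin 5 → Fin 2) : Prop :=
  5*Mx < 6*ivalN x g 0 ∧ 5*My < 6*ivalN y g 1

/-- Nonincreasing position-values. -/
abbrev Mono (x : Fin 5 → ℕ) : Prop := ∀ k l : Fin 5, k ≤ l → x l ≤ x k

/-- Item valuation induced by position values `x` via the ranking `r`. -/
noncomputable def wv (r : Equiv.Perm (Fin 5)) (x : Fin 5 → ℕ) : Fin 5 → ℝ :=
  fun j => (x (r.symm j) : ℝ)

/-- The two-player profile with position values `x` (player 0) and `y` (player 1). -/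
noncomputable def prof (r : Equiv.Perm (Fin 5)) (x y : Fin 5 → ℕ) : Fin 2 → Fin 5 → ℝ :=
  fun i => if i = 0 then wv r x else wv r y

variable {r : Equiv.Perm (Fin 5)} {x y x' y' : Fin 5 → ℕ}

lemma prof_zero : prof r x y 0 = wv r x := if_pos rfl

lemma prof_one : prof r x y 1 = wv r y := if_neg (by decide)

lemma wv_nonneg : ∀ j, 0 ≤ wv r x j := fun j => Nat.cast_nonneg _

lemma prof_nonneg : ∀ i j, 0 ≤ prof r x y i j := by
  intro i j; unfold prof; split <;> exact wv_nonneg j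

lemma cons_wv (hx : Mono x) : Consistent (wv r x) r := by
  intro k l hkl
  unfold wv
  simp only [Equiv.symm_apply_apply]
  exact_mod_cast hx k l hkl

lemma prof_cons (hx : Mono x) (hy : Mono y) :
    ∀ i, Consistent (prof r x y i) ((fun _ => r) i) := by
  intro i; unfold prof; split <;> [exact cons_wv hx; exact cons_wv hy]

lemma update_prof0 : Function.update (prof r x y) 0 (wv r x') = prof r x' y := by
  funext i
  fin_cases i <;> simp [Function.update, prof]

lemma update_prof1 : Function.update (prof r x y) 1 (wv r y') = prof r x y' := by
  funext i
  fin_cases i <;> simp [Function.update, prof]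

/-- Key reindexing bridge: the real value of a bundle equals the integer positional value. -/
lemma bridge (r : Equiv.Perm (Fin 5)) (x : Fin 5 → ℕ) (alloc : Fin 5 → Fin 2) (i : Fin 2) :
    bundleVal (wv r x) (bundleOf alloc i) = (ivalN x (fun k => alloc (r k)) i : ℝ) := by
  unfold bundleVal bundleOf ivalN wv
  push_cast
  rw [Finset.sum_filter, Finset.sum_filter]
  rw [← Equiv.sum_comp r (fun j => if alloc j = i then ((x (r.symm j) : ℕ) : ℝ) else 0)]
  simp

lemma mms_ge (r : Equiv.Perm (Fin 5)) (x : Fin 5 → ℕ) (f0 : Fin 5 → Fin 2) (M : ℕ)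
    (h : ∀ i, M ≤ ivalN x f0 i) : (M : ℝ) ≤ mms 2 (wv r x) := by
  have hb : BddAbove (Set.range fun f : Fin 5 → Fin 2 =>
      ⨅ i, bundleVal (wv r x) (bundleOf f i)) := (Set.finite_range _).bddAbove
  refine le_trans ?_ (le_ciSup hb (fun j => f0 (r.symm j)))
  refine le_ciInf fun i => ?_
  rw [bridge]
  have he : (fun k => f0 (r.symm (r k))) = f0 := by
    funext k; simp
  rw [show (fun k => (fun j => f0 (r.symm j)) (r k)) = f0 from he]
  exact_mod_cast h i

/-- Extract integer approximation constraints from `PRApprox`. -/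
lemma approx_extract {ε : ℝ} (hε : 0 < ε) {A : (Fin 2 → Fin 5 → ℝ) → (Fin 5 → Fin 2)}
    (hA : PRApprox (5/6+ε) (fun _ => r) A)
    (x y : Fin 5 → ℕ) (hx : Mono x) (hy : Mono y)
    (Mx My : ℕ) (hMx0 : 0 < Mx) (hMy0 : 0 < My)
    (fx fy : Fin 5 → Fin 2) (hfx : ∀ i, Mx ≤ ivalN x fx i) (hfy : ∀ i, My ≤ ivalN y fy i) :
    UU x Mx y My (fun k => A (prof r x y) (r k)) := by
  have h0 := hA (prof r x y) prof_nonneg (prof_cons hx hy) 0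
  have h1 := hA (prof r x y) prof_nonneg (prof_cons hx hy) 1
  rw [prof_zero, bridge] at h0
  rw [prof_one, bridge] at h1
  have hmx := mms_ge r x fx Mx hfx
  have hmy := mms_ge r y fy My hfy
  have hρ : (0:ℝ) < 5/6 + ε := by linarith
  constructor
  · have h2 : (5/6+ε) * (Mx:ℝ) ≤ (5/6+ε) * mms 2 (wv r x) :=
      mul_le_mul_of_nonneg_left hmx (le_of_lt hρ)
    have hMxR : (0:ℝ) < (Mx:ℕ) := by exact_mod_cast hMx0
    have h3 : (5:ℝ)*Mx < 6 * (ivalN x (fun k => A (prof r x y) (r k)) 0 : ℕ) := by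
      nlinarith
    exact_mod_cast h3
  · have h2 : (5/6+ε) * (My:ℝ) ≤ (5/6+ε) * mms 2 (wv r y) :=
      mul_le_mul_of_nonneg_left hmy (le_of_lt hρ)
    have hMyR : (0:ℝ) < (My:ℕ) := by exact_mod_cast hMy0
    have h3 : (5:ℝ)*My < 6 * (ivalN y (fun k => A (prof r x y) (r k)) 1 : ℕ) := by
      nlinarith
    exact_mod_cast h3

/-- Extract integer truthfulness constraints for player 0. -/
lemma truth0 {A : (Fin 2 → Fin 5 → ℝ) → (Fin 5 → Fin 2)}
    (hT : PRTruthful (fun _ => r) A) (x x' y : Fin 5 → ℕ)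
    (hx : Mono x) (hx' : Mono x') (hy : Mono y) :
    ivalN x (fun k => A (prof r x' y) (r k)) 0 ≤ ivalN x (fun k => A (prof r x y) (r k)) 0 := by
  have h := hT (prof r x y) prof_nonneg (prof_cons hx hy) 0 (wv r x') wv_nonneg (cons_wv hx')
  rw [update_prof0, prof_zero, bridge, bridge] at h
  exact_mod_cast h

/-- Extract integer truthfulness constraints for player 1. -/
lemma truth1 {A : (Fin 2 → Fin 5 → ℝ) → (Fin 5 → Fin 2)}
    (hT : PRTruthful (fun _ => r) A) (x y y' : Fin 5 → ℕ)
    (hx : Mono x) (hy : Mono y) (hy' : Mono y') :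
    ivalN y (fun k => A (prof r x y') (r k)) 1 ≤ ivalN y (fun k => A (prof r x y) (r k)) 1 := by
  have h := hT (prof r x y) prof_nonneg (prof_cons hx hy) 1 (wv r y') wv_nonneg (cons_wv hy')
  rw [update_prof1, prof_one, bridge, bridge] at h
  exact_mod_cast h

lemma mono_a : Mono nva := by decide
lemma mono_b : Mono nvb := by decide
lemma mono_c : Mono nvc := by decide

lemma part_a : ∀ i, 5 ≤ ivalN nva ![0,1,0,1,1] i := by decide
lemma part_b : ∀ i, 4 ≤ ivalN nvb ![0,1,1,1,1] i := by decide
lemma part_c : ∀ i, 5 ≤ ivalN nvc ![0,1,1,0,1] i := by decide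

/-! The finite constraint-propagation core, each step verified by `decide`.
Position-allocations are written as `![...]` giving the player of each position. -/

lemma s_ac : ∀ g, UU nva 5 nvc 5 g →
    g = ![1,0,0,1,1] ∨ g = ![1,0,0,0,1] ∨ g = ![1,0,0,1,0] ∨ g = ![1,0,1,0,0] := by decide

lemma s_cb : ∀ g, UU nvc 5 nvb 4 g →
    g = ![1,0,0,0,1] ∨ g = ![1,0,0,1,0] ∨ g = ![1,0,0,0,0] := by decide

lemma s_bc : ∀ g, UU nvb 4 nvc 5 g →
    g = ![0,1,1,1,1] ∨ g = ![0,1,1,0,1] ∨ g = ![0,1,1,1,0] := by decide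

lemma s_ca : ∀ g, UU nvc 5 nva 5 g →
    g = ![0,1,0,1,1] ∨ g = ![0,1,1,0,1] ∨ g = ![0,1,1,1,0] ∨ g = ![0,1,1,0,0] := by decide

lemma s_ab : ∀ g g', UU nva 5 nvb 4 g →
    (g' = ![1,0,0,1,1] ∨ g' = ![1,0,0,0,1] ∨ g' = ![1,0,0,1,0] ∨ g' = ![1,0,1,0,0]) →
    ivalN nvb g' 1 ≤ ivalN nvb g 1 → ivalN nvc g 1 ≤ ivalN nvc g' 1 →
    g = ![1,0,0,1,1] ∨ g = ![1,0,0,0,1] ∨ g = ![1,0,0,1,0] ∨ g = ![1,0,1,0,0] := by decide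

lemma s_ab2 : ∀ g g',
    (g = ![1,0,0,1,1] ∨ g = ![1,0,0,0,1] ∨ g = ![1,0,0,1,0] ∨ g = ![1,0,1,0,0]) →
    (g' = ![1,0,0,0,1] ∨ g' = ![1,0,0,1,0] ∨ g' = ![1,0,0,0,0]) →
    ivalN nva g' 0 ≤ ivalN nva g 0 → ivalN nvc g 0 ≤ ivalN nvc g' 0 →
    g = ![1,0,0,0,1] ∨ g = ![1,0,0,1,0] := by decide

lemma s_ba : ∀ g g', UU nvb 4 nva 5 g →
    (g' = ![0,1,1,1,1] ∨ g' = ![0,1,1,0,1] ∨ g' = ![0,1,1,1,0]) →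
    ivalN nva g' 1 ≤ ivalN nva g 1 → ivalN nvc g 1 ≤ ivalN nvc g' 1 →
    g = ![0,1,1,1,1] ∨ g = ![0,1,1,0,1] ∨ g = ![0,1,1,1,0] := by decide

lemma s_ba2 : ∀ g g',
    (g = ![0,1,1,1,1] ∨ g = ![0,1,1,0,1] ∨ g = ![0,1,1,1,0]) →
    (g' = ![0,1,0,1,1] ∨ g' = ![0,1,1,0,1] ∨ g' = ![0,1,1,1,0] ∨ g' = ![0,1,1,0,0]) →
    ivalN nvb g' 0 ≤ ivalN nvb g 0 → ivalN nvc g 0 ≤ ivalN nvc g' 0 →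
    g = ![0,1,1,0,1] ∨ g = ![0,1,1,1,0] := by decide

lemma s_bb : ∀ g g', UU nvb 4 nvb 4 g →
    (g' = ![1,0,0,0,1] ∨ g' = ![1,0,0,1,0]) →
    ivalN nvb g' 0 ≤ ivalN nvb g 0 → ivalN nva g 0 ≤ ivalN nva g' 0 →
    g = ![0,1,1,1,1] := by decide

lemma s_bb2 : ∀ g g',
    g = ![0,1,1,1,1] →
    (g' = ![0,1,1,0,1] ∨ g' = ![0,1,1,1,0]) →
    ivalN nvb g' 1 ≤ ivalN nvb g 1 → ivalN nva g 1 ≤ ivalN nva g' 1 →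
    False := by decide

end Stmt13Aux


/-- For `n = 2` players, `m = 5` items, any strict total order `r` on the items
and any `ε ∈ (0, 1/6]`, there is no truthful `(5/6 + ε)`-approximation mechanism for the public
rankings model in which the publicly known ranking of both players is `r`. -/
theorem stmt13 (r : Equiv.Perm (Fin 5)) (ε : ℝ) (hε : 0 < ε) (hε' : ε ≤ 1 / 6) :
    ¬ ∃ A : (Fin 2 → Fin 5 → ℝ) → (Fin 5 → Fin 2),
        PRTruthful (fun _ => r) A ∧ PRApprox (5 / 6 + ε) (fun _ => r) A := by
  rintro ⟨A, hT, hA⟩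
  -- position-allocations at the seven relevant profiles
  set gab := fun k => A (prof r nva nvb) (r k) with hgab
  set gac := fun k => A (prof r nva nvc) (r k) with hgac
  set gcb := fun k => A (prof r nvc nvb) (r k) with hgcb
  set gba := fun k => A (prof r nvb nva) (r k) with hgba
  set gbc := fun k => A (prof r nvb nvc) (r k) with hgbc
  set gca := fun k => A (prof r nvc nva) (r k) with hgca
  set gbb := fun k => A (prof r nvb nvb) (r k) with hgbb
  -- approximation constraints
  have Uab := approx_extract hε hA nva nvb mono_a mono_b 5 4 (by norm_num) (by norm_num) _ _ part_a part_b
  have Uac := approx_extract hε hA nva nvc mono_a mono_c 5 5 (by norm_num) (by norm_num) _ _ part_a part_c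
  have Ucb := approx_extract hε hA nvc nvb mono_c mono_b 5 4 (by norm_num) (by norm_num) _ _ part_c part_b
  have Uba := approx_extract hε hA nvb nva mono_b mono_a 4 5 (by norm_num) (by norm_num) _ _ part_b part_a
  have Ubc := approx_extract hε hA nvb nvc mono_b mono_c 4 5 (by norm_num) (by norm_num) _ _ part_b part_c
  have Uca := approx_extract hε hA nvc nva mono_c mono_a 5 5 (by norm_num) (by norm_num) _ _ part_c part_a
  have Ubb := approx_extract hε hA nvb nvb mono_b mono_b 4 4 (by norm_num) (by norm_num) _ _ part_b part_b
  -- constraint propagation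
  have hDac := s_ac gac Uac
  have hDcb := s_cb gcb Ucb
  have hDbc := s_bc gbc Ubc
  have hDca := s_ca gca Uca
  have hDab1 := s_ab gab gac Uab hDac
    (truth1 hT nva nvb nvc mono_a mono_b mono_c)
    (truth1 hT nva nvc nvb mono_a mono_c mono_b)
  have hDab := s_ab2 gab gcb hDab1 hDcb
    (truth0 hT nva nvc nvb mono_a mono_c mono_b)
    (truth0 hT nvc nva nvb mono_c mono_a mono_b)
  have hDba1 := s_ba gba gbc Uba hDbc
    (truth1 hT nvb nva nvc mono_b mono_a mono_c)
    (truth1 hT nvb nvc nva mono_b mono_c mono_a)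
  have hDba := s_ba2 gba gca hDba1 hDca
    (truth0 hT nvb nvc nva mono_b mono_c mono_a)
    (truth0 hT nvc nvb nva mono_c mono_b mono_a)
  have hDbb1 := s_bb gbb gab Ubb hDab
    (truth0 hT nvb nva nvb mono_b mono_a mono_b)
    (truth0 hT nva nvb nvb mono_a mono_b mono_b)
  exact s_bb2 gbb gba hDbb1 hDba
    (truth1 hT nvb nvb nva mono_b mono_b mono_a)
    (truth1 hT nvb nva nvb mono_b mono_a mono_b)
end

section
/- For n = 2 players, any number of items m ≥ 6, any strict total order ≽ on the m items, and any ε ∈ (0, 1/5], there is no truthful (4/5 + ε)-approximation mechanism for the public rankings model in which the publicly known ranking of both players equals ≽. -/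
open Finset

namespace S14

variable {m : ℕ}

def pos (h : 6 ≤ m) (i : ℕ) : Fin m := ⟨i % m, Nat.mod_lt _ (by omega)⟩

lemma pos_val (h : 6 ≤ m) {i : ℕ} (hi : i < 6) : ((pos h i : Fin m) : ℕ) = i :=
  Nat.mod_eq_of_lt (by omega)

noncomputable def mval (h : 6 ≤ m) (r : Equiv.Perm (Fin m)) (c : ℕ → ℕ) : Fin m → ℝ :=
  fun j => ∑ i ∈ Finset.range 6, if j = r (pos h i) then (c i : ℝ) else 0

lemma mval_nonneg (h : 6 ≤ m) (r : Equiv.Perm (Fin m)) (c : ℕ → ℕ) (j : Fin m) :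
    0 ≤ mval h r c j := by
  unfold mval
  refine Finset.sum_nonneg fun i _ => ?_
  split <;> positivity

lemma mval_r (h : 6 ≤ m) (r : Equiv.Perm (Fin m)) (c : ℕ → ℕ) (k : Fin m) :
    mval h r c (r k) = if (k : ℕ) < 6 then (c (k : ℕ) : ℝ) else 0 := by
  unfold mval
  rw [Finset.sum_congr rfl (g := fun i => if (k : ℕ) = i then (c i : ℝ) else 0)
    (fun i hi => by
      rw [Finset.mem_range] at hi
      simp [Equiv.apply_eq_iff_eq, Fin.ext_iff, pos_val h hi]),
    Finset.sum_ite_eq (Finset.range 6) (k : ℕ) (fun i => (c i : ℝ))]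
  simp [Finset.mem_range]

lemma consistent_mval (h : 6 ≤ m) (r : Equiv.Perm (Fin m)) (c : ℕ → ℕ)
    (hmono : ∀ i j, i ≤ j → j < 6 → c j ≤ c i) : Consistent (mval h r c) r := by
  intro k l hkl
  rw [mval_r, mval_r]
  rcases lt_or_ge (l : ℕ) 6 with hl | hl
  · have hk : (k : ℕ) < 6 := lt_of_le_of_lt hkl hl
    rw [if_pos hl, if_pos hk]
    exact_mod_cast hmono _ _ hkl hl
  · rw [if_neg (by omega)]
    split <;> positivity

lemma bundleVal_mval (h : 6 ≤ m) (r : Equiv.Perm (Fin m)) (c : ℕ → ℕ) (S : Finset (Fin m)) :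
    bundleVal (mval h r c) S
      = ((∑ i ∈ Finset.range 6, if r (pos h i) ∈ S then c i else 0 : ℕ) : ℝ) := by
  unfold bundleVal mval
  rw [Finset.sum_comm]
  push_cast
  refine Finset.sum_congr rfl fun i _ => ?_
  rw [Finset.sum_ite_eq' S (r (pos h i)) (fun _ => (c i : ℝ))]

lemma mem_bundleOf {n : ℕ} (alloc : Fin m → Fin n) (i : Fin n) (j : Fin m) :
    j ∈ bundleOf alloc i ↔ alloc j = i := by simp [bundleOf]

lemma mms_ge (v : Fin m → ℝ) (hv : ∀ j, 0 ≤ v j) (f : Fin m → Fin 2) :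
    min (bundleVal v (bundleOf f 0)) (bundleVal v (bundleOf f 1)) ≤ mms 2 v := by
  have key : ∀ g : Fin m → Fin 2, ∀ i : Fin 2, bundleVal v (bundleOf g i) ≤ ∑ j, v j :=
    fun g i => Finset.sum_le_sum_of_subset_of_nonneg (Finset.subset_univ _)
      (fun j _ _ => hv j)
  have hb : BddAbove (Set.range fun g : Fin m → Fin 2 =>
      ⨅ i : Fin 2, bundleVal v (bundleOf g i)) := by
    refine ⟨∑ j, v j, ?_⟩
    rintro x ⟨g, rfl⟩
    exact le_trans (ciInf_le (Finite.bddBelow_range _) 0) (key g 0)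
  refine le_trans ?_ (le_ciSup hb f)
  refine le_ciInf fun i => ?_
  fin_cases i
  · exact min_le_left _ _
  · exact min_le_right _ _

def bcount (h : 6 ≤ m) (r : Equiv.Perm (Fin m)) (alloc : Fin m → Fin 2) (i : ℕ) : ℕ :=
  if alloc (r (pos h i)) = 0 then 1 else 0

lemma bcount_le (h : 6 ≤ m) (r : Equiv.Perm (Fin m)) (alloc : Fin m → Fin 2) (i : ℕ) :
    bcount h r alloc i ≤ 1 := by
  unfold bcount; split <;> omega

lemma bv0 (h : 6 ≤ m) (r : Equiv.Perm (Fin m)) (c : ℕ → ℕ) (alloc : Fin m → Fin 2) :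
    bundleVal (mval h r c) (bundleOf alloc 0)
      = ((∑ i ∈ Finset.range 6, c i * bcount h r alloc i : ℕ) : ℝ) := by
  rw [bundleVal_mval]
  congr 1
  refine Finset.sum_congr rfl fun i _ => ?_
  simp only [mem_bundleOf, bcount]
  split <;> simp

lemma bv1 (h : 6 ≤ m) (r : Equiv.Perm (Fin m)) (c : ℕ → ℕ) (alloc : Fin m → Fin 2) :
    bundleVal (mval h r c) (bundleOf alloc 1)
      = ((∑ i ∈ Finset.range 6, c i * (1 - bcount h r alloc i) : ℕ) : ℝ) := by
  rw [bundleVal_mval]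
  congr 1
  refine Finset.sum_congr rfl fun i _ => ?_
  have ht : ∀ t : Fin 2, (t = 1) ↔ ¬ (t = 0) := by decide
  simp only [mem_bundleOf, bcount, ht]
  split
  · rename_i hx
    simp [if_neg hx]
  · rename_i hx
    rw [not_not] at hx
    simp [if_pos hx]

lemma mms_ge_split (h : 6 ≤ m) (r : Equiv.Perm (Fin m)) (c : ℕ → ℕ) (k : ℕ) :
    min ((∑ i ∈ Finset.range 6, if i < k then c i else 0 : ℕ) : ℝ)
        ((∑ i ∈ Finset.range 6, if i < k then 0 else c i : ℕ) : ℝ) ≤ mms 2 (mval h r c) := by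
  classical
  set f : Fin m → Fin 2 := fun j => if ((r.symm j : Fin m) : ℕ) < k then 0 else 1 with hf
  have h0 : bundleVal (mval h r c) (bundleOf f 0)
      = ((∑ i ∈ Finset.range 6, if i < k then c i else 0 : ℕ) : ℝ) := by
    rw [bundleVal_mval]
    congr 1
    refine Finset.sum_congr rfl fun i hi => ?_
    rw [Finset.mem_range] at hi
    simp only [mem_bundleOf, hf, Equiv.symm_apply_apply, pos_val h hi]
    by_cases hik : i < k
    · simp [hik]
    · simp [hik]
  have h1 : bundleVal (mval h r c) (bundleOf f 1)
      = ((∑ i ∈ Finset.range 6, if i < k then 0 else c i : ℕ) : ℝ) := by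
    rw [bundleVal_mval]
    congr 1
    refine Finset.sum_congr rfl fun i hi => ?_
    rw [Finset.mem_range] at hi
    simp only [mem_bundleOf, hf, Equiv.symm_apply_apply, pos_val h hi]
    by_cases hik : i < k
    · simp [hik]
    · simp [hik]
  have := mms_ge (mval h r c) (mval_nonneg h r c) f
  rwa [h0, h1] at this

lemma four_lt {ε : ℝ} (hε : 0 < ε) {M N : ℕ} (hM : 0 < M) {mm : ℝ}
    (h1 : (M : ℝ) ≤ mm) (h2 : (4/5 + ε) * mm ≤ (N : ℝ)) : 4 * M < 5 * N := by
  have hMR : (0:ℝ) < M := by exact_mod_cast hM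
  have key : (4:ℝ) * M < 5 * N := by
    nlinarith [mul_le_mul_of_nonneg_left h1 (by linarith : (0:ℝ) ≤ 4/5 + ε),
      mul_pos hε hMR]
  exact_mod_cast key

def prof (v w : Fin m → ℝ) : Fin 2 → Fin m → ℝ := ![v, w]

lemma prof_zero (v w : Fin m → ℝ) : prof v w 0 = v := rfl

lemma prof_one (v w : Fin m → ℝ) : prof v w 1 = w := rfl

lemma prof_upd0 (v w v' : Fin m → ℝ) : Function.update (prof v w) 0 v' = prof v' w := by
  funext i
  fin_cases i <;> simp [prof, Function.update]

lemma prof_upd1 (v w w' : Fin m → ℝ) : Function.update (prof v w) 1 w' = prof v w' := by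
  funext i
  fin_cases i <;> simp [prof, Function.update]

lemma prof_nonneg (h : 6 ≤ m) (r : Equiv.Perm (Fin m)) (c1 c2 : ℕ → ℕ) :
    ∀ i j, 0 ≤ prof (mval h r c1) (mval h r c2) i j := by
  intro i j
  fin_cases i
  · exact mval_nonneg h r c1 j
  · exact mval_nonneg h r c2 j

lemma prof_cons (h : 6 ≤ m) (r : Equiv.Perm (Fin m)) (c1 c2 : ℕ → ℕ)
    (h1 : ∀ i j, i ≤ j → j < 6 → c1 j ≤ c1 i) (h2 : ∀ i j, i ≤ j → j < 6 → c2 j ≤ c2 i) :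
    ∀ i : Fin 2, Consistent (prof (mval h r c1) (mval h r c2) i) ((fun _ => r) i) := by
  intro i
  fin_cases i
  · exact consistent_mval h r c1 h1
  · exact consistent_mval h r c2 h2

lemma approx_pair (h : 6 ≤ m) (r : Equiv.Perm (Fin m)) {ε : ℝ} (hε : 0 < ε)
    (A : (Fin 2 → Fin m → ℝ) → (Fin m → Fin 2))
    (hA : PRApprox (4/5 + ε) (fun _ => r) A) (c1 c2 : ℕ → ℕ)
    (hm1 : ∀ i j, i ≤ j → j < 6 → c1 j ≤ c1 i) (hm2 : ∀ i j, i ≤ j → j < 6 → c2 j ≤ c2 i)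
    {M1 M2 : ℕ} (hp1 : 0 < M1) (hp2 : 0 < M2)
    (hM1 : (M1 : ℝ) ≤ mms 2 (mval h r c1)) (hM2 : (M2 : ℝ) ≤ mms 2 (mval h r c2)) :
    4 * M1 < 5 * (∑ i ∈ Finset.range 6,
        c1 i * bcount h r (A (prof (mval h r c1) (mval h r c2))) i) ∧
    4 * M2 < 5 * (∑ i ∈ Finset.range 6,
        c2 i * (1 - bcount h r (A (prof (mval h r c1) (mval h r c2))) i)) := by
  have t0 := hA (prof (mval h r c1) (mval h r c2)) (prof_nonneg h r c1 c2)
    (prof_cons h r c1 c2 hm1 hm2) 0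
  have t1 := hA (prof (mval h r c1) (mval h r c2)) (prof_nonneg h r c1 c2)
    (prof_cons h r c1 c2 hm1 hm2) 1
  rw [prof_zero, bv0] at t0
  rw [prof_one, bv1] at t1
  exact ⟨four_lt hε hp1 hM1 t0, four_lt hε hp2 hM2 t1⟩

lemma truth_dev0 (h : 6 ≤ m) (r : Equiv.Perm (Fin m))
    (A : (Fin 2 → Fin m → ℝ) → (Fin m → Fin 2))
    (hT : PRTruthful (fun _ => r) A) (c1 c1' c2 : ℕ → ℕ)
    (hm1 : ∀ i j, i ≤ j → j < 6 → c1 j ≤ c1 i) (hm1' : ∀ i j, i ≤ j → j < 6 → c1' j ≤ c1' i)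
    (hm2 : ∀ i j, i ≤ j → j < 6 → c2 j ≤ c2 i) :
    (∑ i ∈ Finset.range 6, c1 i * bcount h r (A (prof (mval h r c1') (mval h r c2))) i)
      ≤ ∑ i ∈ Finset.range 6, c1 i * bcount h r (A (prof (mval h r c1) (mval h r c2))) i := by
  have ht := hT (prof (mval h r c1) (mval h r c2)) (prof_nonneg h r c1 c2)
    (prof_cons h r c1 c2 hm1 hm2) 0 (mval h r c1') (mval_nonneg h r c1')
    (consistent_mval h r c1' hm1')
  rw [prof_upd0, prof_zero, bv0, bv0] at ht
  exact_mod_cast ht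

lemma truth_dev1 (h : 6 ≤ m) (r : Equiv.Perm (Fin m))
    (A : (Fin 2 → Fin m → ℝ) → (Fin m → Fin 2))
    (hT : PRTruthful (fun _ => r) A) (c1 c2 c2' : ℕ → ℕ)
    (hm1 : ∀ i j, i ≤ j → j < 6 → c1 j ≤ c1 i) (hm2 : ∀ i j, i ≤ j → j < 6 → c2 j ≤ c2 i)
    (hm2' : ∀ i j, i ≤ j → j < 6 → c2' j ≤ c2' i) :
    (∑ i ∈ Finset.range 6, c2 i * (1 - bcount h r (A (prof (mval h r c1) (mval h r c2'))) i))
      ≤ ∑ i ∈ Finset.range 6,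
          c2 i * (1 - bcount h r (A (prof (mval h r c1) (mval h r c2))) i) := by
  have ht := hT (prof (mval h r c1) (mval h r c2)) (prof_nonneg h r c1 c2)
    (prof_cons h r c1 c2 hm1 hm2) 1 (mval h r c2') (mval_nonneg h r c2')
    (consistent_mval h r c2' hm2')
  rw [prof_upd1, prof_one, bv1, bv1] at ht
  exact_mod_cast ht

def cX : ℕ → ℕ := fun i => if i = 0 then 5 else 1
def cY : ℕ → ℕ := fun i => if i = 0 then 3 else 1
def cW : ℕ → ℕ := fun _ => 1

lemma monoX : ∀ i j : ℕ, i ≤ j → j < 6 → cX j ≤ cX i := by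
  intro i j hij hj
  simp only [cX]
  split <;> split <;> omega

lemma monoY : ∀ i j : ℕ, i ≤ j → j < 6 → cY j ≤ cY i := by
  intro i j hij hj
  simp only [cY]
  split <;> split <;> omega

lemma monoW : ∀ i j : ℕ, i ≤ j → j < 6 → cW j ≤ cW i := by
  intro i j hij hj
  simp only [cW]
  omega

end S14

open S14

/-- For `n = 2` players, any `m ≥ 6` items, any strict total order `r` on the
items and any `ε ∈ (0, 1/5]`, there is no truthful `(4/5 + ε)`-approximation mechanism for the
public rankings model in which the publicly known ranking of both players is `r`. -/
theorem stmt14 (m : ℕ) (hm : 6 ≤ m) (r : Equiv.Perm (Fin m)) (ε : ℝ)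
    (hε : 0 < ε) (hε' : ε ≤ 1 / 5) :
    ¬ ∃ A : (Fin 2 → Fin m → ℝ) → (Fin m → Fin 2),
        PRTruthful (fun _ => r) A ∧ PRApprox (4 / 5 + ε) (fun _ => r) A := by
  rintro ⟨A, hT, hA⟩
  classical
  have hMx : ((5 : ℕ) : ℝ) ≤ mms 2 (mval hm r cX) := by
    refine le_trans ?_ (mms_ge_split hm r cX 1)
    have e1 : (∑ i ∈ Finset.range 6, if i < 1 then cX i else 0) = 5 := by
      simp [Finset.sum_range_succ, cX]
    have e2 : (∑ i ∈ Finset.range 6, if i < 1 then 0 else cX i) = 5 := by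
      simp [Finset.sum_range_succ, cX]
    rw [e1, e2, min_self]
  have hMy : ((4 : ℕ) : ℝ) ≤ mms 2 (mval hm r cY) := by
    refine le_trans ?_ (mms_ge_split hm r cY 2)
    have e1 : (∑ i ∈ Finset.range 6, if i < 2 then cY i else 0) = 4 := by
      simp [Finset.sum_range_succ, cY]
    have e2 : (∑ i ∈ Finset.range 6, if i < 2 then 0 else cY i) = 4 := by
      simp [Finset.sum_range_succ, cY]
    rw [e1, e2, min_self]
  have hMw : ((3 : ℕ) : ℝ) ≤ mms 2 (mval hm r cW) := by
    refine le_trans ?_ (mms_ge_split hm r cW 3)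
    have e1 : (∑ i ∈ Finset.range 6, if i < 3 then cW i else 0) = 3 := by decide
    have e2 : (∑ i ∈ Finset.range 6, if i < 3 then 0 else cW i) = 3 := by decide
    rw [e1, e2, min_self]
  obtain ⟨hXX0, hXX1⟩ := approx_pair hm r hε A hA cX cX monoX monoX
    (by norm_num) (by norm_num) hMx hMx
  obtain ⟨hXW0, hXW1⟩ := approx_pair hm r hε A hA cX cW monoX monoW
    (by norm_num) (by norm_num) hMx hMw
  obtain ⟨hYW0, hYW1⟩ := approx_pair hm r hε A hA cY cW monoY monoW
    (by norm_num) (by norm_num) hMy hMw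
  obtain ⟨hWX0, hWX1⟩ := approx_pair hm r hε A hA cW cX monoW monoX
    (by norm_num) (by norm_num) hMw hMx
  obtain ⟨hWY0, hWY1⟩ := approx_pair hm r hε A hA cW cY monoW monoY
    (by norm_num) (by norm_num) hMw hMy
  have tA2 := truth_dev1 hm r A hT cX cW cX monoX monoW monoX
  have tA4 := truth_dev0 hm r A hT cX cY cW monoX monoY monoW
  have tB2 := truth_dev0 hm r A hT cW cX cX monoW monoX monoX
  have tB4 := truth_dev1 hm r A hT cW cX cY monoW monoX monoY
  have bXX := fun i => bcount_le hm r (A (prof (mval hm r cX) (mval hm r cX))) i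
  have bXW := fun i => bcount_le hm r (A (prof (mval hm r cX) (mval hm r cW))) i
  have bYW := fun i => bcount_le hm r (A (prof (mval hm r cY) (mval hm r cW))) i
  have bWX := fun i => bcount_le hm r (A (prof (mval hm r cW) (mval hm r cX))) i
  have bWY := fun i => bcount_le hm r (A (prof (mval hm r cW) (mval hm r cY))) i
  have bXX0 := bXX 0; have bXX1 := bXX 1; have bXX2 := bXX 2
  have bXX3 := bXX 3; have bXX4 := bXX 4; have bXX5 := bXX 5
  have bXW0 := bXW 0; have bXW1 := bXW 1; have bXW2 := bXW 2
  have bXW3 := bXW 3; have bXW4 := bXW 4; have bXW5 := bXW 5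
  have bYW0 := bYW 0; have bYW1 := bYW 1; have bYW2 := bYW 2
  have bYW3 := bYW 3; have bYW4 := bYW 4; have bYW5 := bYW 5
  have bWX0 := bWX 0; have bWX1 := bWX 1; have bWX2 := bWX 2
  have bWX3 := bWX 3; have bWX4 := bWX 4; have bWX5 := bWX 5
  have bWY0 := bWY 0; have bWY1 := bWY 1; have bWY2 := bWY 2
  have bWY3 := bWY 3; have bWY4 := bWY 4; have bWY5 := bWY 5
  simp only [Finset.sum_range_succ, Finset.sum_range_zero, cX, cY, cW] at hXX0 hXX1 hXW0 hXW1 hYW0 hYW1 hWX0 hWX1 hWY0 hWY1 tA2 tA4 tB2 tB4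
  norm_num at hXX0 hXX1 hXW0 hXW1 hYW0 hYW1 hWX0 hWX1 hWY0 hWY1 tA2 tA4 tB2 tB4
  omega
end
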